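/- arXiv:2302.07062 — 10 statements merged into one kernel-verified Lean document; each statement's English description precedes it below -/
import Mathlib

section
/- For integers l and n with (l = 3 and n ≥ 11) or (l ≥ 4 and n ≥ 2l+3), we have C(n-2, l) - C(n-2, l-1) ≥ (n-l-2)(n-l). -/
-- diagonal base: D(2j+7, j+3) ≥ (j+4)(j+6) for j ≥ 1
lemma diag : ∀ j : ℕ, 1 ≤ j →
    ((2*j+7).choose (j+3) : ℤ) - ((2*j+7).choose (j+2) : ℤ) ≥ ((j:ℤ)+4)*((j:ℤ)+6) := by
  intro j hj
  induction j with
  | zero => omega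
  | succ j ih =>
    rcases Nat.eq_or_lt_of_le hj with h1 | h1
    · -- j+1 = 1
      have : j = 0 := by omega
      subst this
      norm_num [Nat.choose]
    · have hj1 : 1 ≤ j := by omega
      have IH := ih hj1
      -- expand both chooses at 2(j+1)+7 = 2j+9
      have p1 : ∀ a b : ℕ, (a+2).choose (b+2) = a.choose b + 2 * a.choose (b+1) + a.choose (b+2) := by
        intro a b
        rw [show a+2 = (a+1)+1 from rfl, Nat.choose_succ_succ (a+1) (b+1),
          Nat.choose_succ_succ a b, Nat.choose_succ_succ a (b+1)]
        ring
      have e1 : (2*(j+1)+7).choose (j+1+3)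
          = (2*j+7).choose (j+2) + 2 * (2*j+7).choose (j+3) + (2*j+7).choose (j+4) := by
        rw [show 2*(j+1)+7 = (2*j+7)+2 by ring, show j+1+3 = (j+2)+2 by ring]
        exact p1 (2*j+7) (j+2)
      have e2 : (2*(j+1)+7).choose (j+1+2)
          = (2*j+7).choose (j+1) + 2 * (2*j+7).choose (j+2) + (2*j+7).choose (j+3) := by
        rw [show 2*(j+1)+7 = (2*j+7)+2 by ring, show j+1+2 = (j+1)+2 by ring]
        exact p1 (2*j+7) (j+1)
      have symm : (2*j+7).choose (j+4) = (2*j+7).choose (j+3) := by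
        have : (2*j+7) - (j+3) = j + 4 := by omega
        rw [← this, Nat.choose_symm (by omega)]
      have mono : (2*j+7).choose (j+1) ≤ (2*j+7).choose (j+2) :=
        Nat.choose_le_succ_of_lt_half_left (by omega)
      rw [e1, e2, symm]
      push_cast
      have monoZ : ((2*j+7).choose (j+1) : ℤ) ≤ ((2*j+7).choose (j+2) : ℤ) := by
        exact_mod_cast mono
      nlinarith [IH, monoZ]

lemma c2 : ∀ m : ℕ, 7 ≤ m → 3*(m-1) ≤ m.choose 2 := by
  intro m hm
  induction m with
  | zero => omega
  | succ m ih =>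
    rcases Nat.eq_or_lt_of_le hm with h1 | h1
    · have : m = 6 := by omega
      subst this
      decide
    · have h7 : 7 ≤ m := by omega
      have := ih h7
      have e : (m+1).choose 2 = m.choose 1 + m.choose 2 := Nat.choose_succ_succ m 1
      rw [e, Nat.choose_one_right]
      omega

-- l = 3 case
lemma l3 : ∀ m : ℕ, 9 ≤ m → ((m).choose 3 : ℤ) - ((m).choose 2 : ℤ) ≥ ((m:ℤ)-3)*((m:ℤ)-1) := by
  intro m hm
  induction m, hm using Nat.le_induction with
  | base => norm_num [Nat.choose]
  | succ m hm ih =>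
    have e1 : (m+1).choose 3 = m.choose 2 + m.choose 3 := Nat.choose_succ_succ m 2
    have e2 : (m+1).choose 2 = m.choose 1 + m.choose 2 := Nat.choose_succ_succ m 1
    have hc2 : 3*(m-1) ≤ m.choose 2 := c2 m (by omega)
    have hc2' : ((m:ℤ)-1)*3 ≤ (m.choose 2 : ℤ) := by
      have : ((3*(m-1) : ℕ) : ℤ) ≤ (m.choose 2 : ℤ) := by exact_mod_cast hc2
      have h9 : (9:ℤ) ≤ (m:ℤ) := by exact_mod_cast hm
      push_cast [Nat.cast_sub (show 1 ≤ m by omega)] at this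
      linarith
    rw [e1, e2, Nat.choose_one_right]
    push_cast
    have h9 : (9:ℤ) ≤ (m:ℤ) := by exact_mod_cast hm
    nlinarith [ih]

lemma key : ∀ m : ℕ, ∀ j : ℕ, ((j = 0 ∧ 9 ≤ m) ∨ (1 ≤ j ∧ 2*j+7 ≤ m)) →
    ((m).choose (j+3) : ℤ) - ((m).choose (j+2) : ℤ) ≥ ((m:ℤ)-(j:ℤ)-3)*((m:ℤ)-(j:ℤ)-1) := by
  intro m
  induction m using Nat.strong_induction_on with
  | _ m IH =>
    intro j hj
    rcases hj with ⟨hj0, hm⟩ | ⟨hj1, hm⟩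
    · subst hj0
      have := l3 m hm
      push_cast
      linarith
    · rcases Nat.eq_or_lt_of_le hm with h1 | h1
      · -- m = 2j+7
        subst h1
        have := diag j hj1
        push_cast
        push_cast at this
        nlinarith [this]
      · -- m ≥ 2j+8, write m = m'+1
        obtain ⟨m', rfl⟩ : ∃ m', m = m' + 1 := ⟨m - 1, by omega⟩
        have hm' : 2*j+7 ≤ m' := by omega
        have ih1 : ((m').choose (j+3) : ℤ) - ((m').choose (j+2) : ℤ)
            ≥ ((m':ℤ)-(j:ℤ)-3)*((m':ℤ)-(j:ℤ)-1) :=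
          IH m' (by omega) j (Or.inr ⟨hj1, hm'⟩)
        have ih2 : ((m').choose ((j-1)+3) : ℤ) - ((m').choose ((j-1)+2) : ℤ)
            ≥ ((m':ℤ)-((j:ℤ)-1)-3)*((m':ℤ)-((j:ℤ)-1)-1) := by
          rcases Nat.eq_or_lt_of_le hj1 with hq | hq
          · have hj' : j = 1 := hq.symm
            subst hj'
            have := IH m' (by omega) 0 (Or.inl ⟨rfl, by omega⟩)
            simpa using this
          · have := IH m' (by omega) (j-1) (Or.inr ⟨by omega, by omega⟩)
            have hc : ((j-1 : ℕ) : ℤ) = (j:ℤ) - 1 := by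
              push_cast [Nat.cast_sub (show 1 ≤ j by omega)]; ring
            rw [hc] at this
            exact this
        have ej : (j-1)+3 = j+2 := by omega
        have ej2 : (j-1)+2 = j+1 := by omega
        rw [ej, ej2] at ih2
        have e1 : (m'+1).choose (j+3) = m'.choose (j+2) + m'.choose (j+3) :=
          Nat.choose_succ_succ m' (j+2)
        have e2 : (m'+1).choose (j+2) = m'.choose (j+1) + m'.choose (j+2) :=
          Nat.choose_succ_succ m' (j+1)
        rw [e1, e2]
        push_cast
        have hmz : (2*(j:ℤ)+7) ≤ (m':ℤ) := by exact_mod_cast hm'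
        nlinarith [ih1, ih2]

theorem stmt_0 (n l : ℕ)
    (h : (l = 3 ∧ 11 ≤ n) ∨ (4 ≤ l ∧ 2 * l + 3 ≤ n)) :
    ((n - 2).choose l : ℤ) - ((n - 2).choose (l - 1) : ℤ) ≥
      ((n : ℤ) - l - 2) * ((n : ℤ) - l) := by
  have hl3 : 3 ≤ l := by rcases h with ⟨h1,_⟩|⟨h1,_⟩ <;> omega
  have hn : 9 ≤ n - 2 := by rcases h with ⟨h1,h2⟩|⟨h1,h2⟩ <;> omega
  obtain ⟨j, rfl⟩ : ∃ j, l = j + 3 := ⟨l - 3, by omega⟩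
  have hcond : (j = 0 ∧ 9 ≤ n - 2) ∨ (1 ≤ j ∧ 2*j+7 ≤ n - 2) := by
    rcases h with ⟨h1,h2⟩|⟨h1,h2⟩
    · left; constructor; omega; omega
    · right; constructor; omega; omega
  have hk := key (n-2) j hcond
  have el : j + 3 - 1 = j + 2 := by omega
  rw [el]
  have hcast : ((n - 2 : ℕ) : ℤ) = (n:ℤ) - 2 := by
    have : 2 ≤ n := by omega
    push_cast [Nat.cast_sub this]; ring
  rw [hcast] at hk
  have : ((n:ℤ) - ((j:ℤ)+3) - 2) * ((n:ℤ) - ((j:ℤ)+3)) = ((n:ℤ)-2-(j:ℤ)-3)*((n:ℤ)-2-(j:ℤ)-1) := by ring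
  push_cast
  linarith [hk]
end

section
/- Let n ≥ 2 and let G be a graph on n vertices in which every edge is contained in at least one triangle (a T-graph). Let A be the family of subsets of [n] consisting of all triangles of G (as 3-element vertex sets) together with all 2-element subsets of [n] that are non-edges of G. Then A is a maximal antichain in the Boolean lattice B_n, and |A| = t(G) + e(Ḡ), where t(G) is the number of triangles of G and e(Ḡ) is the number of edges of the complement of G. -/
section Aux

variable {n : ℕ} (G : SimpleGraph (Fin n))

/-- pair map from Sym2 to Finset -/
noncomputable def sym2ToFinset : Sym2 (Fin n) → Finset (Fin n) :=
  Sym2.lift ⟨fun a b => ({a, b} : Finset (Fin n)), fun a b => by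
    simp [Finset.pair_comm]⟩

@[simp] lemma sym2ToFinset_mk (a b : Fin n) :
    sym2ToFinset s(a, b) = ({a, b} : Finset (Fin n)) := rfl

end Aux

/-- `A` is a maximal antichain in the Boolean lattice of all subsets of a finite type. -/
def IsMaximalAntichainBool {V : Type*} (A : Set (Finset V)) : Prop :=
  IsAntichain (· ⊆ ·) A ∧
    ∀ B : Finset V, B ∉ A → ¬ IsAntichain (· ⊆ ·) (insert B A)

theorem stmt_5 (n : ℕ) (hn : 2 ≤ n) (G : SimpleGraph (Fin n))
    (hT : ∀ u v : Fin n, G.Adj u v → ∃ w : Fin n, G.Adj u w ∧ G.Adj v w) :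
    IsMaximalAntichainBool
      ({s : Finset (Fin n) | G.IsNClique 3 s} ∪
        {s : Finset (Fin n) | s.card = 2 ∧ ∀ x ∈ s, ∀ y ∈ s, x ≠ y → ¬ G.Adj x y}) ∧
    ({s : Finset (Fin n) | G.IsNClique 3 s} ∪
        {s : Finset (Fin n) | s.card = 2 ∧ ∀ x ∈ s, ∀ y ∈ s, x ≠ y → ¬ G.Adj x y}).ncard =
      {s : Finset (Fin n) | G.IsNClique 3 s}.ncard + Gᶜ.edgeSet.ncard := by
  classical
  set T : Set (Finset (Fin n)) := {s : Finset (Fin n) | G.IsNClique 3 s} with hTdef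
  set P : Set (Finset (Fin n)) :=
    {s : Finset (Fin n) | s.card = 2 ∧ ∀ x ∈ s, ∀ y ∈ s, x ≠ y → ¬ G.Adj x y} with hPdef
  have hcardT : ∀ s ∈ T, s.card = 3 := fun s hs => hs.2
  have hcardP : ∀ s ∈ P, s.card = 2 := fun s hs => hs.1
  -- every member of T ∪ P containing a given pair exists, etc.
  have hanti : IsAntichain (· ⊆ ·) (T ∪ P) := by
    rintro a (ha | ha) b (hb | hb) hne hsub
    · exact hne (Finset.eq_of_subset_of_card_le hsub (by rw [hcardT a ha, hcardT b hb]))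
    · have := Finset.card_le_card hsub
      rw [hcardT a ha, hcardP b hb] at this; omega
    · -- a is a non-edge pair contained in a triangle b : contradiction
      obtain ⟨x, y, hxy, hxa⟩ := Finset.card_eq_two.1 (hcardP a ha)
      have hx : x ∈ b := hsub (by simp [hxa])
      have hy : y ∈ b := hsub (by simp [hxa])
      have : G.Adj x y := hb.1 (by simpa using hx) (by simpa using hy) hxy
      exact ha.2 x (by simp [hxa]) y (by simp [hxa]) hxy this
    · exact hne (Finset.eq_of_subset_of_card_le hsub (by rw [hcardP a ha, hcardP b hb]))
  -- helper: every vertex lies in some member of T ∪ P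
  have hcover : ∀ x : Fin n, ∃ C ∈ T ∪ P, x ∈ C := by
    intro x
    by_cases hx : ∃ y, G.Adj x y
    · obtain ⟨y, hxy⟩ := hx
      obtain ⟨w, hxw, hyw⟩ := hT x y hxy
      refine ⟨{x, y, w}, Or.inl ?_, by simp⟩
      exact SimpleGraph.is3Clique_triple_iff.2 ⟨hxy, hxw, hyw⟩
    · push_neg at hx
      have : ∃ y : Fin n, y ≠ x := by
        obtain ⟨y, hy⟩ := Fintype.exists_ne_of_one_lt_card (by simp; omega) x
        exact ⟨y, hy⟩
      obtain ⟨y, hy⟩ := this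
      refine ⟨{x, y}, Or.inr ⟨Finset.card_pair (Ne.symm hy), ?_⟩, by simp⟩
      intro a ha b hb hab
      simp only [Finset.mem_insert, Finset.mem_singleton] at ha hb
      rcases ha with rfl | rfl <;> rcases hb with rfl | rfl <;>
        first
        | exact absurd rfl hab
        | exact hx b
        | exact fun h => hx a h.symm
  have hmax : ∀ B : Finset (Fin n), B ∉ T ∪ P →
      ¬ IsAntichain (· ⊆ ·) (insert B (T ∪ P)) := by
    intro B hB hA
    -- it suffices to find C ∈ T ∪ P comparable with B
    have key : ∀ C ∈ T ∪ P, ¬ (B ⊆ C) ∧ ¬ (C ⊆ B) := by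
      intro C hC
      have hne : B ≠ C := fun h => hB (h ▸ hC)
      exact ⟨hA (Set.mem_insert _ _) (Set.mem_insert_of_mem _ hC) hne,
        fun h => hA (Set.mem_insert_of_mem _ hC) (Set.mem_insert _ _) (Ne.symm hne) h⟩
    rcases lt_or_ge B.card 2 with hc | hc
    · -- card ≤ 1 : B is contained in some member
      obtain ⟨x0⟩ : Nonempty (Fin n) := ⟨⟨0, by omega⟩⟩
      by_cases hBe : B = ∅
      · obtain ⟨C, hC, -⟩ := hcover x0
        exact (key C hC).1 (hBe ▸ Finset.empty_subset C)
      · obtain ⟨x, hx⟩ := Finset.nonempty_iff_ne_empty.2 hBe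
        have hB1 : B = {x} := by
          apply Finset.eq_singleton_iff_unique_mem.2 ⟨hx, ?_⟩
          intro y hy
          by_contra hxy
          have : 2 ≤ B.card := Finset.one_lt_card.2 ⟨y, hy, x, hx, hxy⟩
          omega
        obtain ⟨C, hC, hxC⟩ := hcover x
        exact (key C hC).1 (by rw [hB1]; simpa using hxC)
    rcases eq_or_lt_of_le hc with hc2 | hc3
    · -- card 2: must be an edge, extend to a triangle
      obtain ⟨x, y, hxy, hBxy⟩ := Finset.card_eq_two.1 hc2.symm
      have hadj : G.Adj x y := by
        by_contra hna
        apply hB; right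
        refine ⟨hc2.symm, ?_⟩
        intro a ha b hb hab
        rw [hBxy] at ha hb
        simp only [Finset.mem_insert, Finset.mem_singleton] at ha hb
        rcases ha with rfl | rfl <;> rcases hb with rfl | rfl
        · exact absurd rfl hab
        · exact hna
        · exact fun h => hna h.symm
        · exact absurd rfl hab
      obtain ⟨w, hxw, hyw⟩ := hT x y hadj
      have hC : ({x, y, w} : Finset (Fin n)) ∈ T :=
        SimpleGraph.is3Clique_triple_iff.2 ⟨hadj, hxw, hyw⟩
      exact (key _ (Or.inl hC)).1 (by rw [hBxy]; intro a ha; simp at ha ⊢; tauto)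
    · -- card ≥ 3
      by_cases hclique : G.IsClique ↑B
      · rcases eq_or_lt_of_le (show 3 ≤ B.card from hc3) with h3 | h4
        · exact hB (Or.inl ⟨hclique, h3.symm⟩)
        · obtain ⟨C, hCB, hC3⟩ := Finset.exists_subset_card_eq (show 3 ≤ B.card by omega)
          have : C ∈ T := ⟨hclique.subset (by exact_mod_cast hCB), hC3⟩
          exact (key C (Or.inl this)).2 hCB
      · -- B contains a non-edge pair
        rw [SimpleGraph.isClique_iff, Set.Pairwise] at hclique
        push_neg at hclique
        obtain ⟨x, hx, y, hy, hxy, hna⟩ := hclique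
        have hP : ({x, y} : Finset (Fin n)) ∈ P := by
          refine ⟨Finset.card_pair hxy, ?_⟩
          intro a ha b hb hab
          simp only [Finset.mem_insert, Finset.mem_singleton] at ha hb
          rcases ha with rfl | rfl <;> rcases hb with rfl | rfl
          · exact absurd rfl hab
          · exact hna
          · exact fun h => hna h.symm
          · exact absurd rfl hab
        refine (key _ (Or.inr hP)).2 ?_
        intro a ha
        simp only [Finset.mem_insert, Finset.mem_singleton] at ha
        rcases ha with rfl | rfl
        · exact hx
        · exact hy
  refine ⟨⟨hanti, hmax⟩, ?_⟩
  -- cardinality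
  have hdisj : Disjoint T P := by
    rw [Set.disjoint_left]
    intro s hsT hsP
    have := hcardT s hsT; have := hcardP s hsP; omega
  rw [Set.ncard_union_eq hdisj (Set.toFinite T) (Set.toFinite P)]
  congr 1
  -- P = image of Gᶜ.edgeSet under sym2ToFinset
  have hPim : P = sym2ToFinset '' Gᶜ.edgeSet := by
    ext s
    constructor
    · rintro ⟨hs2, hna⟩
      obtain ⟨x, y, hxy, rfl⟩ := Finset.card_eq_two.1 hs2
      refine ⟨s(x, y), ?_, rfl⟩
      rw [SimpleGraph.mem_edgeSet, SimpleGraph.compl_adj]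
      exact ⟨hxy, hna x (by simp) y (by simp) hxy⟩
    · rintro ⟨e, he, rfl⟩
      induction e using Sym2.ind with
      | _ x y =>
        rw [SimpleGraph.mem_edgeSet, SimpleGraph.compl_adj] at he
        obtain ⟨hxy, hna⟩ := he
        refine ⟨by simp [Finset.card_pair hxy], ?_⟩
        intro a ha b hb hab
        simp only [sym2ToFinset_mk, Finset.mem_insert, Finset.mem_singleton] at ha hb
        rcases ha with rfl | rfl <;> rcases hb with rfl | rfl
        · exact absurd rfl hab
        · exact hna
        · exact fun h => hna h.symm
        · exact absurd rfl hab
  rw [hPim]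
  apply Set.ncard_image_of_injOn
  intro e he f hf hef
  induction e using Sym2.ind with
  | _ a b =>
    induction f using Sym2.ind with
    | _ c d =>
      rw [SimpleGraph.mem_edgeSet, SimpleGraph.compl_adj] at he hf
      simp only [sym2ToFinset_mk] at hef
      have hab : a ≠ b := he.1
      have h : a = c ∧ b = d ∨ a = d ∧ b = c := by
        have hc : c ∈ ({a, b} : Finset (Fin n)) := by rw [hef]; simp
        have hd : d ∈ ({a, b} : Finset (Fin n)) := by rw [hef]; simp
        have ha : a ∈ ({c, d} : Finset (Fin n)) := by rw [← hef]; simp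
        have hb : b ∈ ({c, d} : Finset (Fin n)) := by rw [← hef]; simp
        simp only [Finset.mem_insert, Finset.mem_singleton] at hc hd ha hb
        rcases ha with rfl | rfl <;> rcases hb with rfl | rfl <;> tauto
      rcases h with ⟨rfl, rfl⟩ | ⟨rfl, rfl⟩
      · rfl
      · exact Sym2.eq_swap
end

section
/- Let A' ⊆ C([n-1], l) ∪ C([n-1], l+1) be a maximal antichain in B_{n-1}, where 2 ≤ l ≤ n-1. Then A = A' ∪ { A ∪ {n} : A ∈ C([n-1], l-1) } is a maximal antichain in B_n of size |A'| + C(n-1, l-1), contained in C([n], l) ∪ C([n], l+1). -/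
/-- `A` is a maximal antichain in the Boolean lattice `B_n` of subsets of `[n] = {1,…,n}`. -/
def IsMaximalAntichainIn (n : ℕ) (A : Finset (Finset ℕ)) : Prop :=
  (∀ s ∈ A, s ⊆ Finset.Icc 1 n) ∧
    IsAntichain (· ⊆ ·) (A : Set (Finset ℕ)) ∧
    ∀ B : Finset ℕ, B ⊆ Finset.Icc 1 n → B ∉ A →
      ¬ IsAntichain (· ⊆ ·) (insert B (A : Set (Finset ℕ)))

theorem stmt_7 (n l : ℕ) (h2 : 2 ≤ l) (hl : l ≤ n - 1)
    (A' : Finset (Finset ℕ))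
    (hA'sub : A' ⊆ Finset.powersetCard l (Finset.Icc 1 (n - 1)) ∪
        Finset.powersetCard (l + 1) (Finset.Icc 1 (n - 1)))
    (hA' : IsMaximalAntichainIn (n - 1) A') :
    IsMaximalAntichainIn n
        (A' ∪ (Finset.powersetCard (l - 1) (Finset.Icc 1 (n - 1))).image (insert n)) ∧
      (A' ∪ (Finset.powersetCard (l - 1) (Finset.Icc 1 (n - 1))).image (insert n)).card =
        A'.card + (n - 1).choose (l - 1) ∧
      (A' ∪ (Finset.powersetCard (l - 1) (Finset.Icc 1 (n - 1))).image (insert n)) ⊆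
        Finset.powersetCard l (Finset.Icc 1 n) ∪
          Finset.powersetCard (l + 1) (Finset.Icc 1 n) := by
  have hn3 : 3 ≤ n := by omega
  have hIccsub : Finset.Icc 1 (n - 1) ⊆ Finset.Icc 1 n :=
    Finset.Icc_subset_Icc_right (by omega)
  have hnIcc : n ∉ Finset.Icc 1 (n - 1) := by
    simp only [Finset.mem_Icc]; omega
  set N := (Finset.powersetCard (l - 1) (Finset.Icc 1 (n - 1))).image (insert n) with hNdef
  have hNspec : ∀ t ∈ N, n ∈ t ∧ t.card = l ∧ t ⊆ Finset.Icc 1 n := by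
    intro t ht
    simp only [hNdef, Finset.mem_image, Finset.mem_powersetCard] at ht
    obtain ⟨c, ⟨hcs, hcc⟩, rfl⟩ := ht
    have hnc : n ∉ c := fun h => hnIcc (hcs h)
    refine ⟨Finset.mem_insert_self _ _, ?_, ?_⟩
    · rw [Finset.card_insert_of_notMem hnc, hcc]; omega
    · intro x hx
      rcases Finset.mem_insert.1 hx with rfl | hx
      · exact Finset.mem_Icc.2 ⟨by omega, le_rfl⟩
      · exact hIccsub (hcs hx)
  have hA'spec : ∀ s ∈ A', s ⊆ Finset.Icc 1 (n - 1) ∧ l ≤ s.card ∧ n ∉ s := by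
    intro s hs
    rcases Finset.mem_union.1 (hA'sub hs) with h | h <;>
      rw [Finset.mem_powersetCard] at h
    · exact ⟨h.1, by omega, fun hn => hnIcc (h.1 hn)⟩
    · exact ⟨h.1, by omega, fun hn => hnIcc (h.1 hn)⟩
  have hanti : IsAntichain (· ⊆ ·) ((A' ∪ N : Finset (Finset ℕ)) : Set (Finset ℕ)) := by
    intro x hx y hy hne hsub
    simp only [Finset.coe_union, Set.mem_union, Finset.mem_coe] at hx hy
    rcases hx with hx | hx <;> rcases hy with hy | hy
    · exact hA'.2.1 hx hy hne hsub
    · obtain ⟨hys, hyc, _⟩ := hNspec y hy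
      obtain ⟨_, hxc, hxn⟩ := hA'spec x hx
      have hsub' : x ⊆ y.erase n :=
        fun a ha => Finset.mem_erase.2 ⟨fun h => hxn (h ▸ ha), hsub ha⟩
      have := Finset.card_le_card hsub'
      rw [Finset.card_erase_of_mem hys, hyc] at this
      omega
    · obtain ⟨hxs, _, _⟩ := hNspec x hx
      obtain ⟨_, _, hyn⟩ := hA'spec y hy
      exact hyn (hsub hxs)
    · obtain ⟨_, hxc, _⟩ := hNspec x hx
      obtain ⟨_, hyc, _⟩ := hNspec y hy
      exact hne (Finset.eq_of_subset_of_card_le hsub (by omega))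
  have hmax : ∀ B : Finset ℕ, B ⊆ Finset.Icc 1 n → B ∉ A' ∪ N →
      ¬ IsAntichain (· ⊆ ·) (insert B ((A' ∪ N : Finset (Finset ℕ)) : Set (Finset ℕ))) := by
    intro B hBsub hBnot hIA
    by_cases hnB : n ∈ B
    · set B' := B.erase n with hB'
      have hB'sub : B' ⊆ Finset.Icc 1 (n - 1) := by
        intro x hx
        obtain ⟨hxn, hxB⟩ := Finset.mem_erase.1 hx
        have := Finset.mem_Icc.1 (hBsub hxB)
        exact Finset.mem_Icc.2 ⟨this.1, by omega⟩
      by_cases hcard : l - 1 ≤ B'.card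
      · obtain ⟨C, hCB, hCc⟩ := Finset.exists_subset_card_eq hcard
        have hCN : insert n C ∈ N := by
          rw [hNdef, Finset.mem_image]
          exact ⟨C, Finset.mem_powersetCard.2 ⟨hCB.trans hB'sub, hCc⟩, rfl⟩
        have hsub : insert n C ⊆ B := by
          intro x hx
          rcases Finset.mem_insert.1 hx with rfl | hx
          · exact hnB
          · exact Finset.erase_subset _ _ (hCB hx)
        have hne : insert n C ≠ B := fun h => hBnot (h ▸ Finset.mem_union_right _ hCN)
        exact hIA (Set.mem_insert_iff.2 (Or.inr (Finset.mem_union_right _ hCN)))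
          (Set.mem_insert _ _) hne hsub
      · obtain ⟨C, hB'C, hCsub, hCc⟩ := Finset.exists_subsuperset_card_eq (n := l - 1) hB'sub
          (by omega) (by rw [Nat.card_Icc]; omega)
        have hCN : insert n C ∈ N := by
          rw [hNdef, Finset.mem_image]
          exact ⟨C, Finset.mem_powersetCard.2 ⟨hCsub, hCc⟩, rfl⟩
        have hsub : B ⊆ insert n C := by
          intro x hx
          by_cases h : x = n
          · exact h ▸ Finset.mem_insert_self _ _
          · exact Finset.mem_insert_of_mem (hB'C (Finset.mem_erase.2 ⟨h, hx⟩))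
        have hBc : B.card < l := by
          have h1 : B'.card = B.card - 1 := Finset.card_erase_of_mem hnB
          have h2 : 1 ≤ B.card := Finset.card_pos.2 ⟨n, hnB⟩
          omega
        have hne : B ≠ insert n C := fun h => by
          obtain ⟨_, hc, _⟩ := hNspec _ hCN
          rw [← h] at hc
          omega
        exact hIA (Set.mem_insert _ _)
          (Set.mem_insert_iff.2 (Or.inr (Finset.mem_union_right _ hCN))) hne hsub
    · have hBsub' : B ⊆ Finset.Icc 1 (n - 1) := by
        intro x hx
        have h1 := Finset.mem_Icc.1 (hBsub hx)
        have hxn : x ≠ n := fun h => hnB (h ▸ hx)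
        exact Finset.mem_Icc.2 ⟨h1.1, by omega⟩
      have hBA' : B ∉ A' := fun h => hBnot (Finset.mem_union_left _ h)
      refine hA'.2.2 B hBsub' hBA' (hIA.subset ?_)
      apply Set.insert_subset_insert
      rw [Finset.coe_union]
      exact Set.subset_union_left
  have hdisj : Disjoint A' N := by
    rw [Finset.disjoint_left]
    intro t ht htN
    exact (hA'spec t ht).2.2 ((hNspec t htN).1)
  have hNcard : N.card = (n - 1).choose (l - 1) := by
    rw [hNdef, Finset.card_image_of_injOn, Finset.card_powersetCard, Nat.card_Icc]
    · congr 1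
    · intro a ha b hb h
      simp only [Finset.mem_coe, Finset.mem_powersetCard] at ha hb
      have hna : n ∉ a := fun hn => hnIcc (ha.1 hn)
      have hnb : n ∉ b := fun hn => hnIcc (hb.1 hn)
      rw [← Finset.erase_insert hna, ← Finset.erase_insert hnb, h]
  refine ⟨⟨?_, hanti, hmax⟩, ?_, ?_⟩
  · intro s hs
    rcases Finset.mem_union.1 hs with h | h
    · exact fun x hx => hIccsub ((hA'spec s h).1 hx)
    · exact (hNspec s h).2.2
  · rw [Finset.card_union_of_disjoint hdisj, hNcard]
  · intro s hs
    rcases Finset.mem_union.1 hs with h | h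
    · exact Finset.union_subset_union (Finset.powersetCard_mono hIccsub)
        (Finset.powersetCard_mono hIccsub) (hA'sub h)
    · obtain ⟨_, hc, hs'⟩ := hNspec s h
      exact Finset.mem_union_left _ (Finset.mem_powersetCard.2 ⟨hs', hc⟩)
end

section
/- Let A' ⊆ C([n-1], l-1) ∪ C([n-1], l) be a maximal antichain in B_{n-1}, where 3 ≤ l ≤ n-2. Then A = { A ∪ {n} : A ∈ A' } ∪ C([n-1], l+1) is a maximal antichain in B_n of size |A'| + C(n-1, l+1), contained in C([n], l) ∪ C([n], l+1). -/
theorem stmt_8 (n l : ℕ) (h2 : 3 ≤ l) (hl : l ≤ n - 2)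
    (A' : Finset (Finset ℕ))
    (hA'sub : A' ⊆ Finset.powersetCard (l - 1) (Finset.Icc 1 (n - 1)) ∪
        Finset.powersetCard l (Finset.Icc 1 (n - 1)))
    (hA' : IsMaximalAntichainIn (n - 1) A') :
    IsMaximalAntichainIn n
        (A'.image (insert n) ∪ Finset.powersetCard (l + 1) (Finset.Icc 1 (n - 1))) ∧
      (A'.image (insert n) ∪ Finset.powersetCard (l + 1) (Finset.Icc 1 (n - 1))).card =
        A'.card + (n - 1).choose (l + 1) ∧
      (A'.image (insert n) ∪ Finset.powersetCard (l + 1) (Finset.Icc 1 (n - 1))) ⊆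
        Finset.powersetCard l (Finset.Icc 1 n) ∪
          Finset.powersetCard (l + 1) (Finset.Icc 1 n) := by
  have hn : 5 ≤ n := by omega
  set A : Finset (Finset ℕ) :=
    A'.image (insert n) ∪ Finset.powersetCard (l + 1) (Finset.Icc 1 (n - 1)) with hAdef
  -- basic facts
  have hnot : ∀ a : Finset ℕ, a ⊆ Finset.Icc 1 (n - 1) → n ∉ a := by
    intro a ha hna
    have := ha hna
    simp [Finset.mem_Icc] at this
    omega
  have hA'Icc : ∀ a ∈ A', a ⊆ Finset.Icc 1 (n - 1) := hA'.1
  have hA'card : ∀ a ∈ A', a.card = l - 1 ∨ a.card = l := by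
    intro a ha
    rcases Finset.mem_union.mp (hA'sub ha) with h | h
    · exact Or.inl (Finset.mem_powersetCard.mp h).2
    · exact Or.inr (Finset.mem_powersetCard.mp h).2
  have hsubIcc : Finset.Icc 1 (n - 1) ⊆ Finset.Icc 1 n := by
    intro x hx; simp [Finset.mem_Icc] at *; omega
  -- membership description of A
  have hmemA : ∀ x : Finset ℕ, x ∈ A ↔
      (∃ a ∈ A', x = insert n a) ∨ (x ⊆ Finset.Icc 1 (n - 1) ∧ x.card = l + 1) := by
    intro x
    simp only [hAdef, Finset.mem_union, Finset.mem_image, Finset.mem_powersetCard]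
    constructor
    · rintro (⟨a, ha, rfl⟩ | ⟨h1, h2⟩)
      · exact Or.inl ⟨a, ha, rfl⟩
      · exact Or.inr ⟨h1, h2⟩
    · rintro (⟨a, ha, rfl⟩ | ⟨h1, h2⟩)
      · exact Or.inl ⟨a, ha, rfl⟩
      · exact Or.inr ⟨h1, h2⟩
  -- extraction from maximality of A'
  have extract : ∀ B : Finset ℕ, B ⊆ Finset.Icc 1 (n - 1) → B ∉ A' →
      ∃ a ∈ A', a ≠ B ∧ (B ⊆ a ∨ a ⊆ B) := by
    intro B hBs hBA'
    have h := hA'.2.2 B hBs hBA'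
    rw [IsAntichain, Set.pairwise_insert] at h
    simp only [Pi.compl_apply, compl_iff_not] at h
    push_neg at h
    obtain ⟨a, ha, hne, hor⟩ := h hA'.2.1
    exact ⟨a, ha, hne.symm, or_iff_not_imp_left.mpr hor⟩
  -- A is an antichain
  have hanti : IsAntichain (· ⊆ ·) (A : Set (Finset ℕ)) := by
    intro x hx y hy hne hxy
    rw [Finset.mem_coe, hmemA] at hx hy
    rcases hx with ⟨a, ha, rfl⟩ | ⟨hx1, hx2⟩
    · rcases hy with ⟨b, hb, rfl⟩ | ⟨hy1, hy2⟩
      · have hna : n ∉ a := hnot a (hA'Icc a ha)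
        have hnb : n ∉ b := hnot b (hA'Icc b hb)
        have hab : a ⊆ b := by
          intro x hxa
          have := hxy (Finset.mem_insert_of_mem hxa)
          rcases Finset.mem_insert.mp this with rfl | h
          · exact absurd hxa hna
          · exact h
        have hne' : a ≠ b := fun h => hne (by rw [h])
        exact hA'.2.1 (Finset.mem_coe.mpr ha) (Finset.mem_coe.mpr hb) hne' hab
      · have : n ∈ y := hxy (Finset.mem_insert_self n a)
        exact hnot y hy1 this
    · rcases hy with ⟨b, hb, rfl⟩ | ⟨hy1, hy2⟩
      · have hnb : n ∉ b := hnot b (hA'Icc b hb)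
        have hxb : x ⊆ b := by
          intro z hz
          rcases Finset.mem_insert.mp (hxy hz) with rfl | h
          · exact absurd hz (hnot x hx1)
          · exact h
        have := Finset.card_le_card hxb
        have hbc := hA'card b hb
        omega
      · have := Finset.card_le_card hxy
        have : x = y := Finset.eq_of_subset_of_card_le hxy (by omega)
        exact hne this
  -- A ⊆ Icc 1 n pieces
  have hAIcc : ∀ s ∈ A, s ⊆ Finset.Icc 1 n := by
    intro s hs
    rw [hmemA] at hs
    rcases hs with ⟨a, ha, rfl⟩ | ⟨h1, _⟩
    · intro x hx
      rcases Finset.mem_insert.mp hx with rfl | h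
      · simp [Finset.mem_Icc]; omega
      · exact hsubIcc (hA'Icc a ha h)
    · exact h1.trans hsubIcc
  refine ⟨⟨hAIcc, hanti, ?_⟩, ?_, ?_⟩
  · -- maximality
    intro B hB hBA hcontra
    by_cases hnB : n ∈ B
    · -- case n ∈ B
      set B₀ := B.erase n with hB₀
      have hB₀sub : B₀ ⊆ Finset.Icc 1 (n - 1) := by
        intro x hx
        have hx' := hB (Finset.mem_of_mem_erase hx)
        have hxn := Finset.ne_of_mem_erase hx
        simp [Finset.mem_Icc] at *; omega
      have hBeq : B = insert n B₀ := by
        rw [hB₀, Finset.insert_erase hnB]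
      have hB₀A' : B₀ ∉ A' := by
        intro h
        apply hBA
        rw [hmemA]
        exact Or.inl ⟨B₀, h, hBeq⟩
      obtain ⟨a, ha, hne, hor⟩ := extract B₀ hB₀sub hB₀A'
      have hina : insert n a ∈ A := by rw [hmemA]; exact Or.inl ⟨a, ha, rfl⟩
      have hne2 : insert n a ≠ B := by
        intro h
        apply hne
        rw [hBeq] at h
        have hna : n ∉ a := hnot a (hA'Icc a ha)
        have hnb : n ∉ B₀ := Finset.notMem_erase n B
        rw [← Finset.erase_insert hna, ← Finset.erase_insert hnb, h]
      rcases hor with h | h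
      · -- B₀ ⊆ a, so B ⊆ insert n a
        have : B ⊆ insert n a := by
          rw [hBeq]; exact Finset.insert_subset_insert n h
        exact hcontra (Set.mem_insert B _) (Set.mem_insert_of_mem B hina)
          (fun he => hne2 he.symm) this
      · -- a ⊆ B₀, so insert n a ⊆ B
        have : insert n a ⊆ B := by
          rw [hBeq]; exact Finset.insert_subset_insert n h
        exact hcontra (Set.mem_insert_of_mem B hina) (Set.mem_insert B _) hne2 this
    · -- case n ∉ B
      have hBsub : B ⊆ Finset.Icc 1 (n - 1) := by
        intro x hx
        have hx' := hB hx
        have : x ≠ n := fun h => hnB (h ▸ hx)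
        simp [Finset.mem_Icc] at *; omega
      by_cases hc : l + 1 ≤ B.card
      · rcases eq_or_lt_of_le hc with hc' | hc'
        · exact hBA (by rw [hmemA]; exact Or.inr ⟨hBsub, hc'.symm⟩)
        · obtain ⟨c, hcB, hcard⟩ := Finset.exists_subset_card_eq hc
          have hcA : c ∈ A := by
            rw [hmemA]; exact Or.inr ⟨hcB.trans hBsub, hcard⟩
          have hne2 : c ≠ B := by intro he; rw [he] at hcard; omega
          exact hcontra (Set.mem_insert_of_mem B hcA) (Set.mem_insert B _) hne2 hcB
      · -- B.card ≤ l
        push_neg at hc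
        by_cases hBA' : B ∈ A'
        · have hinB : insert n B ∈ A := by rw [hmemA]; exact Or.inl ⟨B, hBA', rfl⟩
          have hne2 : B ≠ insert n B := by
            intro h
            exact hnB (h ▸ Finset.mem_insert_self n B)
          exact hcontra (Set.mem_insert B _) (Set.mem_insert_of_mem B hinB) hne2
            (Finset.subset_insert n B)
        · obtain ⟨a, ha, hne, hor⟩ := extract B hBsub hBA'
          rcases hor with h | h
          · -- B ⊆ a ⊆ insert n a
            have hina : insert n a ∈ A := by rw [hmemA]; exact Or.inl ⟨a, ha, rfl⟩
            have hBsubia : B ⊆ insert n a := h.trans (Finset.subset_insert n a)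
            have hne2 : B ≠ insert n a := by
              intro he
              exact hnB (he ▸ Finset.mem_insert_self n a)
            exact hcontra (Set.mem_insert B _) (Set.mem_insert_of_mem B hina) hne2 hBsubia
          · -- a ⊊ B, so card B = l, extend B to size l+1 inside [n-1]
            have hacard := hA'card a ha
            have hssub : a ⊂ B := Finset.ssubset_iff_subset_ne.mpr ⟨h, hne⟩
            have hlt : a.card < B.card := Finset.card_lt_card hssub
            have hBl : B.card = l := by omega
            -- extend B
            obtain ⟨C, hBC, hCsub, hCcard⟩ : ∃ C : Finset ℕ, B ⊆ C ∧
                C ⊆ Finset.Icc 1 (n - 1) ∧ C.card = l + 1 := by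
              have hcards : B.card ≤ l + 1 := by omega
              have : l + 1 ≤ (Finset.Icc 1 (n - 1)).card := by
                rw [Nat.card_Icc]; omega
              obtain ⟨C, h1, h2, h3⟩ := Finset.exists_subsuperset_card_eq hBsub hcards this
              exact ⟨C, h1, h2, h3⟩
            have hCA : C ∈ A := by rw [hmemA]; exact Or.inr ⟨hCsub, hCcard⟩
            have hne2 : B ≠ C := by
              intro he; rw [he] at hBl; omega
            exact hcontra (Set.mem_insert B _) (Set.mem_insert_of_mem B hCA) hne2 hBC
  · -- cardinality
    have hdisj : Disjoint (A'.image (insert n))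
        (Finset.powersetCard (l + 1) (Finset.Icc 1 (n - 1))) := by
      rw [Finset.disjoint_left]
      rintro x hx hy
      obtain ⟨a, ha, rfl⟩ := Finset.mem_image.mp hx
      have := (Finset.mem_powersetCard.mp hy).1
      exact hnot _ this (Finset.mem_insert_self n a)
    have himg : (A'.image (insert n)).card = A'.card := by
      apply Finset.card_image_of_injOn
      intro a ha b hb hab
      have hna : n ∉ a := hnot a (hA'Icc a ha)
      have hnb : n ∉ b := hnot b (hA'Icc b hb)
      rw [← Finset.erase_insert hna, ← Finset.erase_insert hnb, hab]
    rw [hAdef, Finset.card_union_of_disjoint hdisj, Finset.card_powersetCard, Nat.card_Icc,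
      himg]
    congr 2
  · -- containment
    intro x hx
    rw [hmemA] at hx
    rw [Finset.mem_union, Finset.mem_powersetCard, Finset.mem_powersetCard]
    rcases hx with ⟨a, ha, rfl⟩ | ⟨h1, h2⟩
    · have hna : n ∉ a := hnot a (hA'Icc a ha)
      have hsub : insert n a ⊆ Finset.Icc 1 n := by
        intro y hy
        rcases Finset.mem_insert.mp hy with rfl | h
        · simp [Finset.mem_Icc]; omega
        · exact hsubIcc (hA'Icc a ha h)
      have hcard : (insert n a).card = a.card + 1 := Finset.card_insert_of_notMem hna
      rcases hA'card a ha with h | h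
      · left; exact ⟨hsub, by omega⟩
      · right; exact ⟨hsub, by omega⟩
    · right; exact ⟨h1.trans hsubIcc, h2⟩
end

section
/- Let 3 ≤ l ≤ n-3 and let A', A'' ⊆ C([n-2], l-1) ∪ C([n-2], l) be maximal antichains in B_{n-2}. Then A = {A ∪ {n-1} : A ∈ A'} ∪ {A ∪ {n} : A ∈ A''} ∪ {A ∪ {n-1, n} : A ∈ C([n-2], l-2)} ∪ C([n-2], l+1) is a maximal antichain in B_n of size |A'| + |A''| + C(n-2, l-2) + C(n-2, l+1), contained in C([n], l) ∪ C([n], l+1). -/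
lemma aux_not_antichain_insert {S : Finset (Finset ℕ)} {B C : Finset ℕ}
    (hC : C ∈ S) (hne : C ≠ B) (h : C ⊆ B ∨ B ⊆ C) :
    ¬ IsAntichain (· ⊆ ·) (insert B (S : Set (Finset ℕ))) := by
  intro hac
  rcases h with h | h
  · exact hac (Set.mem_insert_of_mem _ hC) (Set.mem_insert _ _) hne h
  · exact hac (Set.mem_insert _ _) (Set.mem_insert_of_mem _ hC) (fun e => hne e.symm) h

lemma aux_exists_comparable {A : Finset (Finset ℕ)} {B : Finset ℕ}
    (hA : IsAntichain (· ⊆ ·) (A : Set (Finset ℕ)))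
    (h : ¬ IsAntichain (· ⊆ ·) (insert B (A : Set (Finset ℕ)))) :
    ∃ C ∈ A, C ≠ B ∧ (C ⊆ B ∨ B ⊆ C) := by
  by_contra hc
  push_neg at hc
  apply h
  intro x hx y hy hxy hsub
  rcases hx with rfl | hx
  · rcases hy with rfl | hy
    · exact hxy rfl
    · exact (hc y hy (fun e => hxy e.symm)).2 hsub
  · rcases hy with rfl | hy
    · exact (hc x hx hxy).1 hsub
    · exact hA hx hy hxy hsub

theorem stmt_9 (n l : ℕ) (h3 : 3 ≤ l) (hl : l ≤ n - 3)
    (A' A'' : Finset (Finset ℕ))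
    (hA'sub : A' ⊆ Finset.powersetCard (l - 1) (Finset.Icc 1 (n - 2)) ∪
        Finset.powersetCard l (Finset.Icc 1 (n - 2)))
    (hA''sub : A'' ⊆ Finset.powersetCard (l - 1) (Finset.Icc 1 (n - 2)) ∪
        Finset.powersetCard l (Finset.Icc 1 (n - 2)))
    (hA' : IsMaximalAntichainIn (n - 2) A')
    (hA'' : IsMaximalAntichainIn (n - 2) A'') :
    IsMaximalAntichainIn n
        (A'.image (insert (n - 1)) ∪ A''.image (insert n) ∪
          (Finset.powersetCard (l - 2) (Finset.Icc 1 (n - 2))).image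
            (fun A => insert (n - 1) (insert n A)) ∪
          Finset.powersetCard (l + 1) (Finset.Icc 1 (n - 2))) ∧
      (A'.image (insert (n - 1)) ∪ A''.image (insert n) ∪
          (Finset.powersetCard (l - 2) (Finset.Icc 1 (n - 2))).image
            (fun A => insert (n - 1) (insert n A)) ∪
          Finset.powersetCard (l + 1) (Finset.Icc 1 (n - 2))).card =
        A'.card + A''.card + (n - 2).choose (l - 2) + (n - 2).choose (l + 1) ∧
      (A'.image (insert (n - 1)) ∪ A''.image (insert n) ∪
          (Finset.powersetCard (l - 2) (Finset.Icc 1 (n - 2))).image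
            (fun A => insert (n - 1) (insert n A)) ∪
          Finset.powersetCard (l + 1) (Finset.Icc 1 (n - 2))) ⊆
        Finset.powersetCard l (Finset.Icc 1 n) ∪
          Finset.powersetCard (l + 1) (Finset.Icc 1 n) := by
  have hn6 : 6 ≤ n := by omega
  obtain ⟨hA'g, hA'ac, hA'max⟩ := hA'
  obtain ⟨hA''g, hA''ac, hA''max⟩ := hA''
  have hn1 : (n - 1) ∉ Finset.Icc 1 (n - 2) := by
    rw [Finset.mem_Icc]; omega
  have hn2 : n ∉ Finset.Icc 1 (n - 2) := by
    rw [Finset.mem_Icc]; omega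
  have hnot : ∀ a : Finset ℕ, a ⊆ Finset.Icc 1 (n - 2) → (n - 1) ∉ a ∧ n ∉ a :=
    fun a h => ⟨fun hx => hn1 (h hx), fun hx => hn2 (h hx)⟩
  have hIccmono : Finset.Icc 1 (n - 2) ⊆ Finset.Icc 1 n := by
    intro x hx; rw [Finset.mem_Icc] at *; omega
  have hA'el : ∀ a ∈ A', a ⊆ Finset.Icc 1 (n - 2) ∧ (a.card = l - 1 ∨ a.card = l) := by
    intro a ha
    rcases Finset.mem_union.1 (hA'sub ha) with h | h <;>
      rw [Finset.mem_powersetCard] at h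
    · exact ⟨h.1, Or.inl h.2⟩
    · exact ⟨h.1, Or.inr h.2⟩
  have hA''el : ∀ a ∈ A'', a ⊆ Finset.Icc 1 (n - 2) ∧ (a.card = l - 1 ∨ a.card = l) := by
    intro a ha
    rcases Finset.mem_union.1 (hA''sub ha) with h | h <;>
      rw [Finset.mem_powersetCard] at h
    · exact ⟨h.1, Or.inl h.2⟩
    · exact ⟨h.1, Or.inr h.2⟩
  set S := (A'.image (insert (n - 1)) ∪ A''.image (insert n) ∪
      (Finset.powersetCard (l - 2) (Finset.Icc 1 (n - 2))).image
        (fun A => insert (n - 1) (insert n A)) ∪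
      Finset.powersetCard (l + 1) (Finset.Icc 1 (n - 2))) with hSdef
  have hS1 : ∀ a ∈ A', insert (n - 1) a ∈ S := fun a ha =>
    Finset.mem_union_left _ (Finset.mem_union_left _ (Finset.mem_union_left _
      (Finset.mem_image_of_mem _ ha)))
  have hS2 : ∀ a ∈ A'', insert n a ∈ S := fun a ha =>
    Finset.mem_union_left _ (Finset.mem_union_left _ (Finset.mem_union_right _
      (Finset.mem_image_of_mem _ ha)))
  have hS3 : ∀ a : Finset ℕ, a ⊆ Finset.Icc 1 (n - 2) → a.card = l - 2 →
      insert (n - 1) (insert n a) ∈ S := fun a h1 h2 =>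
    Finset.mem_union_left _ (Finset.mem_union_right _
      (Finset.mem_image_of_mem _ (Finset.mem_powersetCard.2 ⟨h1, h2⟩)))
  have hS4 : ∀ s : Finset ℕ, s ⊆ Finset.Icc 1 (n - 2) → s.card = l + 1 → s ∈ S :=
    fun s h1 h2 => Finset.mem_union_right _ (Finset.mem_powersetCard.2 ⟨h1, h2⟩)
  have hSelim : ∀ s ∈ S,
      (∃ a ∈ A', insert (n - 1) a = s) ∨ (∃ a ∈ A'', insert n a = s) ∨
      (∃ a, a ⊆ Finset.Icc 1 (n - 2) ∧ a.card = l - 2 ∧ insert (n - 1) (insert n a) = s) ∨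
      (s ⊆ Finset.Icc 1 (n - 2) ∧ s.card = l + 1) := by
    intro s hs
    rcases Finset.mem_union.1 hs with hs | hs
    · rcases Finset.mem_union.1 hs with hs | hs
      · rcases Finset.mem_union.1 hs with hs | hs
        · exact Or.inl (Finset.mem_image.1 hs)
        · exact Or.inr (Or.inl (Finset.mem_image.1 hs))
      · obtain ⟨a, ha, he⟩ := Finset.mem_image.1 hs
        obtain ⟨h1, h2⟩ := Finset.mem_powersetCard.1 ha
        exact Or.inr (Or.inr (Or.inl ⟨a, h1, h2, he⟩))
    · exact Or.inr (Or.inr (Or.inr (Finset.mem_powersetCard.1 hs)))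
  -- cardinality of inserts
  have hcard1 : ∀ a ∈ A', (insert (n - 1) a).card = a.card + 1 := fun a ha =>
    Finset.card_insert_of_notMem (hnot a (hA'el a ha).1).1
  have hcard2 : ∀ a ∈ A'', (insert n a).card = a.card + 1 := fun a ha =>
    Finset.card_insert_of_notMem (hnot a (hA''el a ha).1).2
  have hcard3 : ∀ a : Finset ℕ, a ⊆ Finset.Icc 1 (n - 2) →
      (insert (n - 1) (insert n a)).card = a.card + 2 := by
    intro a ha
    rw [Finset.card_insert_of_notMem, Finset.card_insert_of_notMem (hnot a ha).2]
    rw [Finset.mem_insert]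
    push_neg
    exact ⟨by omega, (hnot a ha).1⟩
  -- the antichain property
  have hac : IsAntichain (· ⊆ ·) (S : Set (Finset ℕ)) := by
    intro x hx y hy hxy hsub
    replace hx := hSelim x (Finset.mem_coe.1 hx)
    replace hy := hSelim y (Finset.mem_coe.1 hy)
    obtain ⟨a, ha, rfl⟩ | ⟨a, ha, rfl⟩ | ⟨a, haI, hacard, rfl⟩ | ⟨hxI, hxcard⟩ := hx <;>
      obtain ⟨b, hb, rfl⟩ | ⟨b, hb, rfl⟩ | ⟨b, hbI, hbcard, rfl⟩ | ⟨hyI, hycard⟩ := hy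
    · -- T1 T1
      have hna := (hnot a (hA'el a ha).1).1
      have hab : a ⊆ b := by
        intro t ht
        rcases Finset.mem_insert.1 (hsub (Finset.mem_insert_of_mem ht)) with rfl | h
        · exact absurd ht hna
        · exact h
      exact hA'ac (Finset.mem_coe.2 ha) (Finset.mem_coe.2 hb)
        (fun e => hxy (by rw [e])) hab
    · -- T1 T2
      rcases Finset.mem_insert.1 (hsub (Finset.mem_insert_self _ _)) with h | h
      · omega
      · exact (hnot b (hA''el b hb).1).1 h
    · -- T1 T3
      have hab : a ⊆ b := by
        intro t ht
        have htI := (hA'el a ha).1 ht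
        rcases Finset.mem_insert.1 (hsub (Finset.mem_insert_of_mem ht)) with rfl | h
        · exact absurd htI hn1
        · rcases Finset.mem_insert.1 h with rfl | h
          · exact absurd htI hn2
          · exact h
      have := Finset.card_le_card hab
      have := (hA'el a ha).2
      omega
    · -- T1 T4
      exact hn1 (hyI (hsub (Finset.mem_insert_self _ _)))
    · -- T2 T1
      rcases Finset.mem_insert.1 (hsub (Finset.mem_insert_self _ _)) with h | h
      · omega
      · exact (hnot b (hA'el b hb).1).2 h
    · -- T2 T2
      have hna := (hnot a (hA''el a ha).1).2
      have hab : a ⊆ b := by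
        intro t ht
        rcases Finset.mem_insert.1 (hsub (Finset.mem_insert_of_mem ht)) with rfl | h
        · exact absurd ht hna
        · exact h
      exact hA''ac (Finset.mem_coe.2 ha) (Finset.mem_coe.2 hb)
        (fun e => hxy (by rw [e])) hab
    · -- T2 T3
      have hab : a ⊆ b := by
        intro t ht
        have htI := (hA''el a ha).1 ht
        rcases Finset.mem_insert.1 (hsub (Finset.mem_insert_of_mem ht)) with rfl | h
        · exact absurd htI hn1
        · rcases Finset.mem_insert.1 h with rfl | h
          · exact absurd htI hn2
          · exact h
      have := Finset.card_le_card hab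
      have := (hA''el a ha).2
      omega
    · -- T2 T4
      exact hn2 (hyI (hsub (Finset.mem_insert_self _ _)))
    · -- T3 T1
      have hnx : n ∈ insert (n - 1) (insert n a) :=
        Finset.mem_insert_of_mem (Finset.mem_insert_self _ _)
      rcases Finset.mem_insert.1 (hsub hnx) with h | h
      · omega
      · exact (hnot b (hA'el b hb).1).2 h
    · -- T3 T2
      rcases Finset.mem_insert.1 (hsub (Finset.mem_insert_self _ _)) with h | h
      · omega
      · exact (hnot b (hA''el b hb).1).1 h
    · -- T3 T3
      have c1 := hcard3 a haI
      have c2 := hcard3 b hbI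
      exact hxy (Finset.eq_of_subset_of_card_le hsub (by omega))
    · -- T3 T4
      exact hn1 (hyI (hsub (Finset.mem_insert_self _ _)))
    · -- T4 T1
      have c2 := hcard1 b hb
      have := (hA'el b hb).2
      exact hxy (Finset.eq_of_subset_of_card_le hsub (by omega))
    · -- T4 T2
      have c2 := hcard2 b hb
      have := (hA''el b hb).2
      exact hxy (Finset.eq_of_subset_of_card_le hsub (by omega))
    · -- T4 T3
      have c2 := hcard3 b hbI
      have := Finset.card_le_card hsub
      omega
    · -- T4 T4
      exact hxy (Finset.eq_of_subset_of_card_le hsub (by omega))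
  -- shape: ground set and cardinalities
  have hshape : ∀ s ∈ S, s ⊆ Finset.Icc 1 n ∧ (s.card = l ∨ s.card = l + 1) := by
    intro s hs
    replace hs := hSelim s hs
    have hm1 : n - 1 ∈ Finset.Icc 1 n := by rw [Finset.mem_Icc]; omega
    have hmn : n ∈ Finset.Icc 1 n := by rw [Finset.mem_Icc]; omega
    obtain ⟨a, ha, rfl⟩ | ⟨a, ha, rfl⟩ | ⟨a, haI, hacard, rfl⟩ | ⟨hsI, hscard⟩ := hs
    · refine ⟨Finset.insert_subset hm1 (((hA'el a ha).1).trans hIccmono), ?_⟩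
      have := hcard1 a ha
      have := (hA'el a ha).2
      omega
    · refine ⟨Finset.insert_subset hmn (((hA''el a ha).1).trans hIccmono), ?_⟩
      have := hcard2 a ha
      have := (hA''el a ha).2
      omega
    · refine ⟨Finset.insert_subset hm1 (Finset.insert_subset hmn (haI.trans hIccmono)), ?_⟩
      have := hcard3 a haI
      omega
    · exact ⟨hsI.trans hIccmono, Or.inr hscard⟩
  refine ⟨⟨fun s hs => (hshape s hs).1, hac, ?_⟩, ?_, ?_⟩
  · -- maximality
    intro B hB hBn
    by_cases h1 : (n - 1) ∈ B <;> by_cases h2 : n ∈ B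
    · -- both n-1 and n in B
      set B2 := (B.erase (n - 1)).erase n with hB2def
      have hB2sub : B2 ⊆ Finset.Icc 1 (n - 2) := by
        intro x hx
        rw [hB2def, Finset.mem_erase, Finset.mem_erase] at hx
        have := hB hx.2.2
        rw [Finset.mem_Icc] at *
        omega
      have hBrec : insert (n - 1) (insert n B2) = B := by
        rw [hB2def, Finset.insert_erase (Finset.mem_erase.2 ⟨by omega, h2⟩),
          Finset.insert_erase h1]
      by_cases hc : B2.card ≤ l - 2
      · obtain ⟨Z, hZ1, hZ2, hZ3⟩ := Finset.exists_subsuperset_card_eq hB2sub hc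
          (by rw [Nat.card_Icc]; omega)
        refine aux_not_antichain_insert
          (hS3 Z hZ2 hZ3) ?_ (Or.inr ?_)
        · intro he
          exact hBn (by rw [← he]; exact hS3 Z hZ2 hZ3)
        · rw [← hBrec]
          exact Finset.insert_subset_insert _ (Finset.insert_subset_insert _ hZ1)
      · obtain ⟨Z, hZ1, hZ3⟩ := Finset.exists_subset_card_eq
          (show l - 2 ≤ B2.card by omega)
        have hZI : Z ⊆ Finset.Icc 1 (n - 2) := hZ1.trans hB2sub
        refine aux_not_antichain_insert
          (hS3 Z hZI hZ3) ?_ (Or.inl ?_)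
        · intro he
          exact hBn (by rw [← he]; exact hS3 Z hZI hZ3)
        · rw [← hBrec]
          exact Finset.insert_subset_insert _ (Finset.insert_subset_insert _ hZ1)
    · -- n-1 ∈ B, n ∉ B : use A'
      set B0 := B.erase (n - 1) with hB0def
      have hB0sub : B0 ⊆ Finset.Icc 1 (n - 2) := by
        intro x hx
        rw [hB0def, Finset.mem_erase] at hx
        have := hB hx.2
        have : x ≠ n := fun e => h2 (e ▸ hx.2)
        rw [Finset.mem_Icc] at *
        omega
      have hBrec : insert (n - 1) B0 = B := Finset.insert_erase h1
      by_cases hB0A : B0 ∈ A'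
      · exact absurd (hBrec ▸ hS1 B0 hB0A) hBn
      · obtain ⟨C', hC'A, hC'ne, hcomp⟩ :=
          aux_exists_comparable hA'ac (hA'max B0 hB0sub hB0A)
        refine aux_not_antichain_insert (hS1 C' hC'A) ?_ ?_
        · intro he
          apply hC'ne
          have hnc : n - 1 ∉ C' := (hnot C' (hA'el C' hC'A).1).1
          rw [← Finset.erase_insert hnc, he, ← hB0def]
        · rcases hcomp with h | h
          · exact Or.inl (by rw [← hBrec]; exact Finset.insert_subset_insert _ h)
          · exact Or.inr (by rw [← hBrec]; exact Finset.insert_subset_insert _ h)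
    · -- n ∈ B, n-1 ∉ B : use A''
      set B0 := B.erase n with hB0def
      have hB0sub : B0 ⊆ Finset.Icc 1 (n - 2) := by
        intro x hx
        rw [hB0def, Finset.mem_erase] at hx
        have := hB hx.2
        have : x ≠ n - 1 := fun e => h1 (e ▸ hx.2)
        rw [Finset.mem_Icc] at *
        omega
      have hBrec : insert n B0 = B := Finset.insert_erase h2
      by_cases hB0A : B0 ∈ A''
      · exact absurd (hBrec ▸ hS2 B0 hB0A) hBn
      · obtain ⟨C', hC'A, hC'ne, hcomp⟩ :=
          aux_exists_comparable hA''ac (hA''max B0 hB0sub hB0A)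
        refine aux_not_antichain_insert (hS2 C' hC'A) ?_ ?_
        · intro he
          apply hC'ne
          have hnc : n ∉ C' := (hnot C' (hA''el C' hC'A).1).2
          rw [← Finset.erase_insert hnc, he, ← hB0def]
        · rcases hcomp with h | h
          · exact Or.inl (by rw [← hBrec]; exact Finset.insert_subset_insert _ h)
          · exact Or.inr (by rw [← hBrec]; exact Finset.insert_subset_insert _ h)
    · -- neither
      have hBsub : B ⊆ Finset.Icc 1 (n - 2) := by
        intro x hx
        have := hB hx
        have hx1 : x ≠ n - 1 := fun e => h1 (e ▸ hx)
        have hx2 : x ≠ n := fun e => h2 (e ▸ hx)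
        rw [Finset.mem_Icc] at *
        omega
      by_cases hc : B.card ≤ l + 1
      · obtain ⟨Z, hZ1, hZ2, hZ3⟩ := Finset.exists_subsuperset_card_eq hBsub hc
          (by rw [Nat.card_Icc]; omega)
        refine aux_not_antichain_insert
          (hS4 Z hZ2 hZ3) ?_ (Or.inr hZ1)
        intro he
        exact hBn (by rw [← he]; exact hS4 Z hZ2 hZ3)
      · obtain ⟨Z, hZ1, hZ3⟩ := Finset.exists_subset_card_eq
          (show l + 1 ≤ B.card by omega)
        have hZI : Z ⊆ Finset.Icc 1 (n - 2) := hZ1.trans hBsub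
        refine aux_not_antichain_insert
          (hS4 Z hZI hZ3) ?_ (Or.inl hZ1)
        intro he
        exact hBn (by rw [← he]; exact hS4 Z hZI hZ3)
  · -- cardinality
    have hP1 : ∀ s ∈ A'.image (insert (n - 1)), (n - 1) ∈ s ∧ n ∉ s := by
      intro s hs
      obtain ⟨a, ha, rfl⟩ := Finset.mem_image.1 hs
      refine ⟨Finset.mem_insert_self _ _, ?_⟩
      rw [Finset.mem_insert]
      push_neg
      exact ⟨by omega, (hnot a (hA'el a ha).1).2⟩
    have hP2 : ∀ s ∈ A''.image (insert n), n ∈ s ∧ (n - 1) ∉ s := by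
      intro s hs
      obtain ⟨a, ha, rfl⟩ := Finset.mem_image.1 hs
      refine ⟨Finset.mem_insert_self _ _, ?_⟩
      rw [Finset.mem_insert]
      push_neg
      exact ⟨by omega, (hnot a (hA''el a ha).1).1⟩
    have hP3 : ∀ s ∈ (Finset.powersetCard (l - 2) (Finset.Icc 1 (n - 2))).image
        (fun A => insert (n - 1) (insert n A)), (n - 1) ∈ s ∧ n ∈ s := by
      intro s hs
      obtain ⟨a, _, rfl⟩ := Finset.mem_image.1 hs
      exact ⟨Finset.mem_insert_self _ _,
        Finset.mem_insert_of_mem (Finset.mem_insert_self _ _)⟩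
    have hP4 : ∀ s ∈ Finset.powersetCard (l + 1) (Finset.Icc 1 (n - 2)),
        (n - 1) ∉ s ∧ n ∉ s := by
      intro s hs
      exact hnot s (Finset.mem_powersetCard.1 hs).1
    have d3 : Disjoint (A'.image (insert (n - 1))) (A''.image (insert n)) := by
      rw [Finset.disjoint_left]
      intro s hs ht
      exact (hP2 s ht).2 (hP1 s hs).1
    have d2 : Disjoint (A'.image (insert (n - 1)) ∪ A''.image (insert n))
        ((Finset.powersetCard (l - 2) (Finset.Icc 1 (n - 2))).image
          (fun A => insert (n - 1) (insert n A))) := by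
      rw [Finset.disjoint_left]
      intro s hs ht
      rcases Finset.mem_union.1 hs with h | h
      · exact (hP1 s h).2 (hP3 s ht).2
      · exact (hP2 s h).2 (hP3 s ht).1
    have d1 : Disjoint (A'.image (insert (n - 1)) ∪ A''.image (insert n) ∪
        (Finset.powersetCard (l - 2) (Finset.Icc 1 (n - 2))).image
          (fun A => insert (n - 1) (insert n A)))
        (Finset.powersetCard (l + 1) (Finset.Icc 1 (n - 2))) := by
      rw [Finset.disjoint_left]
      intro s hs ht
      rcases Finset.mem_union.1 hs with h | h
      · rcases Finset.mem_union.1 h with h | h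
        · exact (hP4 s ht).1 (hP1 s h).1
        · exact (hP4 s ht).2 (hP2 s h).1
      · exact (hP4 s ht).1 (hP3 s h).1
    rw [hSdef, Finset.card_union_of_disjoint d1, Finset.card_union_of_disjoint d2,
      Finset.card_union_of_disjoint d3]
    have e1 : (A'.image (insert (n - 1))).card = A'.card := by
      apply Finset.card_image_of_injOn
      intro a ha b hb he
      have hna : n - 1 ∉ a := (hnot a (hA'el a ha).1).1
      have hnb : n - 1 ∉ b := (hnot b (hA'el b hb).1).1
      rw [← Finset.erase_insert hna, he, Finset.erase_insert hnb]
    have e2 : (A''.image (insert n)).card = A''.card := by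
      apply Finset.card_image_of_injOn
      intro a ha b hb he
      have hna : n ∉ a := (hnot a (hA''el a ha).1).2
      have hnb : n ∉ b := (hnot b (hA''el b hb).1).2
      rw [← Finset.erase_insert hna, he, Finset.erase_insert hnb]
    have e3 : ((Finset.powersetCard (l - 2) (Finset.Icc 1 (n - 2))).image
        (fun A => insert (n - 1) (insert n A))).card = (n - 2).choose (l - 2) := by
      rw [Finset.card_image_of_injOn, Finset.card_powersetCard, Nat.card_Icc]
      · norm_num
      · intro a ha b hb he
        have haI := (Finset.mem_powersetCard.1 ha).1
        have hbI := (Finset.mem_powersetCard.1 hb).1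
        have h1a : n - 1 ∉ insert n a := by
          rw [Finset.mem_insert]; push_neg; exact ⟨by omega, (hnot a haI).1⟩
        have h1b : n - 1 ∉ insert n b := by
          rw [Finset.mem_insert]; push_neg; exact ⟨by omega, (hnot b hbI).1⟩
        have he' : insert (n - 1) (insert n a) = insert (n - 1) (insert n b) := he
        have h2' : insert n a = insert n b := by
          rw [← Finset.erase_insert h1a, he', Finset.erase_insert h1b]
        rw [← Finset.erase_insert (hnot a haI).2, h2', Finset.erase_insert (hnot b hbI).2]
    have e4 : (Finset.powersetCard (l + 1) (Finset.Icc 1 (n - 2))).card =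
        (n - 2).choose (l + 1) := by
      rw [Finset.card_powersetCard, Nat.card_Icc]
      norm_num
    rw [e1, e2, e3, e4]
  · -- contained in levels l, l+1
    intro s hs
    have := hshape s hs
    rw [Finset.mem_union, Finset.mem_powersetCard, Finset.mem_powersetCard]
    rcases this.2 with h | h
    · exact Or.inl ⟨this.1, h⟩
    · exact Or.inr ⟨this.1, h⟩
end

section
/- Let 2 ≤ l < t < n, let F ⊆ C([t], l) be a family of l-sets that is pairwise shadow-disjoint (i.e. |A ∩ B| ≤ l-2 for distinct A, B ∈ F), and for each A ∈ F let X(A) ⊆ {t+1,...,n} be nonempty. Define A_{l+1} = { A ∪ {i} : A ∈ F, i ∈ X(A) } and A_l = C([n], l) \ ΔA_{l+1}, where ΔA_{l+1} is the shadow (all l-subsets contained in some member of A_{l+1}). Then A = A_{l+1} ∪ A_l is a maximal antichain in B_n of size C(n,l) - |F| - (l-1)·∑_{A∈F} |X(A)|. -/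
open Finset

theorem stmt_10 (n t l : ℕ) (h2 : 2 ≤ l) (hlt : l < t) (htn : t < n)
    (F : Finset (Finset ℕ)) (hF : F ⊆ Finset.powersetCard l (Finset.Icc 1 t))
    (hsd : ∀ A ∈ F, ∀ B ∈ F, A ≠ B → (A ∩ B).card ≤ l - 2)
    (X : Finset ℕ → Finset ℕ)
    (hX : ∀ A ∈ F, X A ⊆ Finset.Icc (t + 1) n ∧ (X A).Nonempty) :
    IsMaximalAntichainIn n
        ((F.biUnion fun A => (X A).image fun i => insert i A) ∪
          (Finset.powersetCard l (Finset.Icc 1 n) \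
            Finset.shadow (F.biUnion fun A => (X A).image fun i => insert i A))) ∧
      (((F.biUnion fun A => (X A).image fun i => insert i A) ∪
          (Finset.powersetCard l (Finset.Icc 1 n) \
            Finset.shadow (F.biUnion fun A => (X A).image fun i => insert i A))).card : ℤ) =
        (n.choose l : ℤ) - F.card - ((l : ℤ) - 1) * ∑ A ∈ F, ((X A).card : ℤ) := by
  classical
  set G := F.biUnion fun A => (X A).image fun i => insert i A with hGdef
  set Sh := G.shadow with hShdef
  set A0 := Finset.powersetCard l (Finset.Icc 1 n) \ Sh with hA0def
  -- basic facts
  have hFm : ∀ A ∈ F, A ⊆ Finset.Icc 1 t ∧ A.card = l := fun A hA =>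
    Finset.mem_powersetCard.mp (hF hA)
  have hFle : ∀ A ∈ F, ∀ x ∈ A, 1 ≤ x ∧ x ≤ t := by
    intro A hA x hx
    simpa [Finset.mem_Icc] using (hFm A hA).1 hx
  have hXm : ∀ A ∈ F, ∀ i ∈ X A, t + 1 ≤ i ∧ i ≤ n := by
    intro A hA i hi
    simpa [Finset.mem_Icc] using (hX A hA).1 hi
  have hXnot : ∀ A ∈ F, ∀ i ∈ X A, i ∉ A := by
    intro A hA i hi hiA
    have h1 := hFle A hA i hiA
    have h2 := hXm A hA i hi
    omega
  have hGmem : ∀ s : Finset ℕ, s ∈ G ↔ ∃ A ∈ F, ∃ i ∈ X A, insert i A = s := by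
    intro s; simp [hGdef, Finset.mem_biUnion, Finset.mem_image]
  have hGcard : ∀ s ∈ G, s.card = l + 1 := by
    intro s hs
    obtain ⟨A, hA, i, hi, rfl⟩ := (hGmem s).mp hs
    rw [Finset.card_insert_of_notMem (hXnot A hA i hi), (hFm A hA).2]
  have hGsub : ∀ s ∈ G, s ⊆ Finset.Icc 1 n := by
    intro s hs
    obtain ⟨A, hA, i, hi, rfl⟩ := (hGmem s).mp hs
    intro x hx
    rcases Finset.mem_insert.mp hx with rfl | hx
    · have := hXm A hA x hi; simp only [Finset.mem_Icc]; omega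
    · have := hFle A hA x hx; simp only [Finset.mem_Icc]; omega
  -- shadow characterization
  have hShmem : ∀ T : Finset ℕ, T ∈ Sh ↔
      (T ∈ F ∨ ∃ A ∈ F, ∃ i ∈ X A, ∃ a ∈ A, insert i (A.erase a) = T) := by
    intro T
    rw [hShdef, Finset.mem_shadow_iff]
    constructor
    · rintro ⟨s, hs, x, hx, rfl⟩
      obtain ⟨A, hA, i, hi, rfl⟩ := (hGmem s).mp hs
      rcases Finset.mem_insert.mp hx with rfl | hxA
      · left; rwa [Finset.erase_insert (hXnot A hA x hi)]
      · right
        refine ⟨A, hA, i, hi, x, hxA, ?_⟩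
        rw [Finset.erase_insert_of_ne]
        intro h; exact hXnot A hA i hi (h ▸ hxA)
    · rintro (hT | ⟨A, hA, i, hi, a, ha, rfl⟩)
      · obtain ⟨i, hi⟩ := (hX T hT).2
        exact ⟨insert i T, (hGmem _).mpr ⟨T, hT, i, hi, rfl⟩, i, Finset.mem_insert_self _ _,
          Finset.erase_insert (hXnot T hT i hi)⟩
      · exact ⟨insert i A, (hGmem _).mpr ⟨A, hA, i, hi, rfl⟩, a,
          Finset.mem_insert_of_mem ha,
          Finset.erase_insert_of_ne (fun h => hXnot A hA i hi (h ▸ ha))⟩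
  have hShcard : ∀ T ∈ Sh, T.card = l := by
    intro T hT
    rcases (hShmem T).mp hT with hT | ⟨A, hA, i, hi, a, ha, rfl⟩
    · exact (hFm T hT).2
    · have hinot : i ∉ A.erase a := fun h => hXnot A hA i hi (Finset.mem_of_mem_erase h)
      rw [Finset.card_insert_of_notMem hinot, Finset.card_erase_of_mem ha, (hFm A hA).2]
      omega
  have hShsub : ∀ T ∈ Sh, T ⊆ Finset.Icc 1 n := by
    intro T hT
    rw [hShdef, Finset.mem_shadow_iff] at hT
    obtain ⟨s, hs, x, hx, rfl⟩ := hT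
    exact (Finset.erase_subset _ _).trans (hGsub s hs)
  -- big element structure
  have hbig : ∀ T ∈ Sh, ∀ i ∈ T, t + 1 ≤ i →
      ∃ A ∈ F, ∃ a ∈ A, i ∈ X A ∧ insert i (A.erase a) = T := by
    intro T hT i hiT hit
    rcases (hShmem T).mp hT with hTF | ⟨A, hA, j, hj, a, ha, rfl⟩
    · exact absurd (hFle T hTF i hiT).2 (by omega)
    · rcases Finset.mem_insert.mp hiT with rfl | hi'
      · exact ⟨A, hA, a, ha, hj, rfl⟩
      · have := hFle A hA i (Finset.mem_of_mem_erase hi')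
        omega
  have hA0card : ∀ s ∈ A0, s.card = l := fun s hs =>
    (Finset.mem_powersetCard.mp (Finset.mem_sdiff.mp hs).1).2
  have hA0sub : ∀ s ∈ A0, s ⊆ Finset.Icc 1 n := fun s hs =>
    (Finset.mem_powersetCard.mp (Finset.mem_sdiff.mp hs).1).1
  -- antichain
  have hanti : IsAntichain (· ⊆ ·) ((G ∪ A0 : Finset (Finset ℕ)) : Set (Finset ℕ)) := by
    intro s hs u hu hne hsub
    simp only [Finset.coe_union, Set.mem_union, Finset.mem_coe] at hs hu
    rcases hs with hs | hs <;> rcases hu with hu | hu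
    · exact hne (Finset.eq_of_subset_of_card_le hsub
        (by rw [hGcard s hs, hGcard u hu]))
    · have h1 := Finset.card_le_card hsub
      rw [hGcard s hs, hA0card u hu] at h1; omega
    · have hmemSh : s ∈ Sh := by
        rw [hShdef, Finset.mem_shadow_iff]
        obtain ⟨x, hxu, hxs⟩ := Finset.exists_of_ssubset (hsub.ssubset_of_ne hne)
        refine ⟨u, hu, x, hxu, ?_⟩
        refine (Finset.eq_of_subset_of_card_le ?_ ?_).symm
        · intro y hy
          exact Finset.mem_erase.mpr ⟨fun h => hxs (h ▸ hy), hsub hy⟩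
        · rw [Finset.card_erase_of_mem hxu, hGcard u hu, hA0card s hs]
          omega
      exact (Finset.mem_sdiff.mp hs).2 hmemSh
    · exact hne (Finset.eq_of_subset_of_card_le hsub
        (by rw [hA0card s hs, hA0card u hu]))
  -- maximality
  have hmax : ∀ B : Finset ℕ, B ⊆ Finset.Icc 1 n → B ∉ G ∪ A0 →
      ∃ C ∈ G ∪ A0, C ≠ B ∧ (B ⊆ C ∨ C ⊆ B) := by
    intro B hB hBnot
    by_cases hcard : B.card ≤ l
    · obtain ⟨T, hBT, hTsub, hTcard⟩ := Finset.exists_subsuperset_card_eq hB hcard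
        (by rw [Nat.card_Icc]; omega)
      by_cases hTS : T ∈ Sh
      · rw [hShdef, Finset.mem_shadow_iff] at hTS
        obtain ⟨s, hsG, x, hx, rfl⟩ := hTS
        refine ⟨s, Finset.mem_union_left _ hsG, ?_,
          Or.inl (hBT.trans (Finset.erase_subset _ _))⟩
        rintro rfl; exact hBnot (Finset.mem_union_left _ hsG)
      · refine ⟨T, Finset.mem_union_right _ (Finset.mem_sdiff.mpr
          ⟨Finset.mem_powersetCard.mpr ⟨hTsub, hTcard⟩, hTS⟩), ?_, Or.inl hBT⟩
        rintro rfl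
        exact hBnot (Finset.mem_union_right _ (Finset.mem_sdiff.mpr
          ⟨Finset.mem_powersetCard.mpr ⟨hTsub, hTcard⟩, hTS⟩))
    · push_neg at hcard
      by_cases hall : ∀ T ⊆ B, T.card = l → T ∈ Sh
      · exfalso
        set B1 := B.filter (fun x => x ≤ t) with hB1def
        set B2 := B.filter (fun x => ¬ x ≤ t) with hB2def
        have hsplit : B1.card + B2.card = B.card :=
          Finset.card_filter_add_card_filter_not _
        have hB1sub : B1 ⊆ B := Finset.filter_subset _ _
        have hB2sub : B2 ⊆ B := Finset.filter_subset _ _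
        -- every l-subset of B1 is in F
        have hB1F : ∀ T ⊆ B1, T.card = l → T ∈ F := by
          intro T hTB1 hTc
          have hTSh := hall T (hTB1.trans hB1sub) hTc
          rcases (hShmem T).mp hTSh with h | ⟨A, hA, i, hi, a, ha, rfl⟩
          · exact h
          · exfalso
            have hi1 : i ∈ B1 := hTB1 (Finset.mem_insert_self _ _)
            have := (Finset.mem_filter.mp hi1).2
            have := (hXm A hA i hi).1
            omega
        -- B2 has at most one element
        have hB2one : B2.card ≤ 1 := by
          by_contra h
          push_neg at h
          obtain ⟨i, hi, j, hj, hij⟩ := Finset.one_lt_card.mp h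
          have hij2 : ({i, j} : Finset ℕ) ⊆ B :=
            Finset.insert_subset (hB2sub hi) (Finset.singleton_subset_iff.mpr (hB2sub hj))
          obtain ⟨T, hsubT, hTB, hTc⟩ := Finset.exists_subsuperset_card_eq hij2
            (by rw [Finset.card_insert_of_notMem (by simpa using hij),
              Finset.card_singleton]; omega) (le_of_lt hcard)
          have hTSh := hall T hTB hTc
          have hibig : t + 1 ≤ i := by
            have := (Finset.mem_filter.mp hi).2; omega
          obtain ⟨A, hA, a, ha, hiX, hEq⟩ := hbig T hTSh i
            (hsubT (Finset.mem_insert_self _ _)) hibig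
          have hjT : j ∈ T := hsubT (by simp)
          rw [← hEq] at hjT
          rcases Finset.mem_insert.mp hjT with rfl | hjA
          · exact hij rfl
          · have := (hFle A hA j (Finset.mem_of_mem_erase hjA)).2
            have := (Finset.mem_filter.mp hj).2
            omega
        -- B1 has at most l elements
        have hB1le : B1.card ≤ l := by
          by_contra h
          push_neg at h
          obtain ⟨T', hT'B1, hT'c⟩ := Finset.exists_subset_card_eq h
          obtain ⟨x, hx, y, hy, hxy⟩ := Finset.one_lt_card.mp
            (by rw [hT'c]; omega : 1 < T'.card)
          have h1 : T'.erase x ∈ F := hB1F _ ((Finset.erase_subset _ _).trans hT'B1)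
            (by rw [Finset.card_erase_of_mem hx, hT'c]; omega)
          have h2 : T'.erase y ∈ F := hB1F _ ((Finset.erase_subset _ _).trans hT'B1)
            (by rw [Finset.card_erase_of_mem hy, hT'c]; omega)
          have hne : T'.erase x ≠ T'.erase y := by
            intro hEq
            have : y ∈ T'.erase x := Finset.mem_erase.mpr ⟨fun h' => hxy h'.symm, hy⟩
            rw [hEq] at this
            exact (Finset.mem_erase.mp this).1 rfl
          have hsd2 := hsd _ h1 _ h2 hne
          have hss : (T'.erase x).erase y ⊆ (T'.erase x) ∩ (T'.erase y) := by
            intro z hz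
            have hz1 := Finset.mem_of_mem_erase hz
            have hz2 := (Finset.mem_erase.mp hz).1
            exact Finset.mem_inter.mpr ⟨hz1,
              Finset.mem_erase.mpr ⟨hz2, Finset.mem_of_mem_erase hz1⟩⟩
          have hyx : y ∈ T'.erase x := Finset.mem_erase.mpr ⟨fun h' => hxy h'.symm, hy⟩
          have hc : ((T'.erase x).erase y).card = l - 1 := by
            rw [Finset.card_erase_of_mem hyx, Finset.card_erase_of_mem hx, hT'c]
            omega
          have := Finset.card_le_card hss
          omega
        have hB1c : B1.card = l := by omega
        have hB2c : B2.card = 1 := by omega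
        obtain ⟨i, hB2i⟩ := Finset.card_eq_one.mp hB2c
        have hiB2 : i ∈ B2 := by rw [hB2i]; exact Finset.mem_singleton_self i
        have hibig : t + 1 ≤ i := by have := (Finset.mem_filter.mp hiB2).2; omega
        have hB1inF : B1 ∈ F := hB1F B1 Finset.Subset.rfl hB1c
        obtain ⟨a, ha⟩ := Finset.card_pos.mp (by omega : 0 < B1.card)
        have hino : i ∉ B1.erase a := by
          intro h
          have := (Finset.mem_filter.mp (Finset.mem_of_mem_erase h)).2
          omega
        set T := insert i (B1.erase a) with hTdef
        have hTB : T ⊆ B := by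
          intro z hz
          rcases Finset.mem_insert.mp hz with rfl | hz
          · exact hB2sub hiB2
          · exact hB1sub (Finset.mem_of_mem_erase hz)
        have hTc : T.card = l := by
          rw [hTdef, Finset.card_insert_of_notMem hino,
            Finset.card_erase_of_mem ha, hB1c]
          omega
        obtain ⟨A, hA, a', ha', hiX, hEq⟩ := hbig T (hall T hTB hTc) i
          (Finset.mem_insert_self _ _) hibig
        have hia' : i ∉ A.erase a' := fun h => hXnot A hA i hiX (Finset.mem_of_mem_erase h)
        have hEr : A.erase a' = B1.erase a := by
          have := congrArg (fun s => Finset.erase s i) hEq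
          simpa [hTdef, Finset.erase_insert hia', Finset.erase_insert hino] using this
        have hAB1 : A = B1 := by
          by_contra hne
          have hsd2 := hsd A hA B1 hB1inF hne
          have hss : A.erase a' ⊆ A ∩ B1 := by
            intro z hz
            exact Finset.mem_inter.mpr ⟨Finset.mem_of_mem_erase hz,
              Finset.mem_of_mem_erase (hEr ▸ hz)⟩
          have h3 := Finset.card_le_card hss
          rw [Finset.card_erase_of_mem ha', (hFm A hA).2] at h3
          omega
        -- then B = insert i B1 ∈ G
        have hBeq : B = insert i B1 := by
          ext z
          constructor
          · intro hz
            by_cases hzt : z ≤ t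
            · exact Finset.mem_insert_of_mem (Finset.mem_filter.mpr ⟨hz, hzt⟩)
            · have : z ∈ B2 := Finset.mem_filter.mpr ⟨hz, hzt⟩
              rw [hB2i] at this
              exact Finset.mem_insert.mpr (Or.inl (Finset.mem_singleton.mp this))
          · intro hz
            rcases Finset.mem_insert.mp hz with rfl | hz
            · exact hB2sub hiB2
            · exact hB1sub hz
        apply hBnot
        apply Finset.mem_union_left
        rw [hGmem]
        exact ⟨B1, hB1inF, i, hAB1 ▸ hiX, hBeq.symm⟩
      · push_neg at hall
        obtain ⟨T, hTB, hTcard, hTS⟩ := hall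
        refine ⟨T, Finset.mem_union_right _ (Finset.mem_sdiff.mpr
          ⟨Finset.mem_powersetCard.mpr ⟨hTB.trans hB, hTcard⟩, hTS⟩), ?_, Or.inr hTB⟩
        rintro rfl; omega
  -- counting
  have hfins : ∀ (s : Finset ℕ), (∀ x ∈ s, x ≤ t) → ∀ i, t + 1 ≤ i →
      (insert i s).filter (fun x => x ≤ t) = s := by
    intro s hs i hi
    ext x
    simp only [Finset.mem_filter, Finset.mem_insert]
    constructor
    · rintro ⟨rfl | hx, hxt⟩
      · omega
      · exact hx
    · intro hx; exact ⟨Or.inr hx, hs x hx⟩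
  have hcardG : G.card = ∑ A ∈ F, (X A).card := by
    rw [hGdef, Finset.card_biUnion]
    · refine Finset.sum_congr rfl fun A hA => Finset.card_image_of_injOn ?_
      intro i hi j hj hij
      by_contra hne
      have hij' : insert i A = insert j A := hij
      have hmem : i ∈ insert j A := by rw [← hij']; exact Finset.mem_insert_self i A
      rcases Finset.mem_insert.mp hmem with h | h
      · exact hne h
      · exact hXnot A hA i (Finset.mem_coe.mp hi) h
    · intro A hA B hB hne
      rw [Function.onFun, Finset.disjoint_left]
      rintro s hs1 hs2
      simp only [Finset.mem_image] at hs1 hs2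
      obtain ⟨i, hi, rfl⟩ := hs1
      obtain ⟨j, hj, hEq⟩ := hs2
      apply hne
      have e1 := hfins A (fun x hx => (hFle A hA x hx).2) i (hXm A hA i hi).1
      have e2 := hfins B (fun x hx => (hFle B hB x hx).2) j (hXm B hB j hj).1
      rw [← e1, ← e2, hEq]
  -- shadow decomposition
  set M := F.biUnion (fun A => (X A).biUnion fun i => A.image fun a => insert i (A.erase a))
    with hMdef
  have hMmem : ∀ T : Finset ℕ, T ∈ M ↔
      ∃ A ∈ F, ∃ i ∈ X A, ∃ a ∈ A, insert i (A.erase a) = T := by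
    intro T; simp [hMdef, Finset.mem_biUnion, Finset.mem_image]
  have hSheq : Sh = F ∪ M := by
    ext T
    rw [hShmem, Finset.mem_union, hMmem]
  have hFMdisj : Disjoint F M := by
    rw [Finset.disjoint_left]
    intro T hTF hTM
    obtain ⟨A, hA, i, hi, a, ha, rfl⟩ := (hMmem T).mp hTM
    have := (hFle _ hTF i (Finset.mem_insert_self _ _)).2
    have := (hXm A hA i hi).1
    omega
  -- unique big element in mixed sets
  have hmixeq : ∀ A ∈ F, ∀ i ∈ X A, ∀ a ∈ A, ∀ B ∈ F, ∀ j ∈ X B, ∀ b ∈ B,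
      insert i (A.erase a) = insert j (B.erase b) → i = j ∧ A.erase a = B.erase b := by
    intro A hA i hi a ha B hB j hj b hb hEq
    have hij : i = j := by
      have : i ∈ insert j (B.erase b) := hEq ▸ Finset.mem_insert_self i _
      rcases Finset.mem_insert.mp this with h | h
      · exact h
      · have := (hFle B hB i (Finset.mem_of_mem_erase h)).2
        have := (hXm A hA i hi).1
        omega
    subst hij
    refine ⟨rfl, ?_⟩
    have hiA : i ∉ A.erase a := fun h => hXnot A hA i hi (Finset.mem_of_mem_erase h)
    have hiB : i ∉ B.erase b := fun h => hXnot B hB i hj (Finset.mem_of_mem_erase h)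
    have := congrArg (fun s => Finset.erase s i) hEq
    simpa [Finset.erase_insert hiA, Finset.erase_insert hiB] using this
  have hsameF : ∀ A ∈ F, ∀ B ∈ F, ∀ a ∈ A, ∀ b ∈ B, A.erase a = B.erase b → A = B := by
    intro A hA B hB a ha b hb hEq
    by_contra hne
    have hsd2 := hsd A hA B hB hne
    have hss : A.erase a ⊆ A ∩ B := fun z hz => Finset.mem_inter.mpr
      ⟨Finset.mem_of_mem_erase hz, Finset.mem_of_mem_erase (hEq ▸ hz)⟩
    have h3 := Finset.card_le_card hss
    rw [Finset.card_erase_of_mem ha, (hFm A hA).2] at h3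
    omega
  have hinjA : ∀ A ∈ F, ∀ i ∈ X A, Set.InjOn (fun a => insert i (A.erase a)) ↑A := by
    intro A hA i hi a ha b hb hEq
    have h2 := (hmixeq A hA i hi a ha A hA i hi b hb hEq).2
    by_contra hne
    have h3 : a ∈ A.erase b := Finset.mem_erase.mpr ⟨hne, ha⟩
    rw [← h2] at h3
    exact (Finset.mem_erase.mp h3).1 rfl
  have houter : ∀ A ∈ F, ∀ B ∈ F, A ≠ B →
      Disjoint ((X A).biUnion fun i => A.image fun a => insert i (A.erase a))
        ((X B).biUnion fun i => B.image fun a => insert i (B.erase a)) := by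
    intro A hA B hB hne
    rw [Finset.disjoint_left]
    rintro s hs1 hs2
    simp only [Finset.mem_biUnion, Finset.mem_image] at hs1 hs2
    obtain ⟨i, hi, a, ha, rfl⟩ := hs1
    obtain ⟨j, hj, b, hb, hEq⟩ := hs2
    exact hne (hsameF A hA B hB a ha b hb
      (hmixeq A hA i hi a ha B hB j hj b hb hEq.symm).2)
  have hmid : ∀ A ∈ F, ∀ i ∈ X A, ∀ j ∈ X A, i ≠ j →
      Disjoint (A.image fun a => insert i (A.erase a))
        (A.image fun a => insert j (A.erase a)) := by
    intro A hA i hi j hj hne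
    rw [Finset.disjoint_left]
    rintro s hs1 hs2
    simp only [Finset.mem_image] at hs1 hs2
    obtain ⟨a, ha, rfl⟩ := hs1
    obtain ⟨b, hb, hEq⟩ := hs2
    exact hne (hmixeq A hA i hi a ha A hA j hj b hb hEq.symm).1
  have hcardM : M.card = ∑ A ∈ F, (X A).card * l := by
    rw [hMdef, Finset.card_biUnion (fun A hA B hB hne => houter A hA B hB hne)]
    refine Finset.sum_congr rfl fun A hA => ?_
    rw [Finset.card_biUnion (fun i hi j hj hne => hmid A hA i hi j hj hne)]
    have hconst : ∀ i ∈ X A, (A.image fun a => insert i (A.erase a)).card = l := by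
      intro i hi
      rw [Finset.card_image_of_injOn (hinjA A hA i hi), (hFm A hA).2]
    rw [Finset.sum_congr rfl hconst]
    try rw [Finset.sum_const]
    try rw [smul_eq_mul]
    try rfl
  have hpc : (Finset.powersetCard l (Finset.Icc 1 n)).card = n.choose l := by
    rw [Finset.card_powersetCard, Nat.card_Icc]
    congr 1
    try omega
  have hShsubP : Sh ⊆ Finset.powersetCard l (Finset.Icc 1 n) := fun T hT =>
    Finset.mem_powersetCard.mpr ⟨hShsub T hT, hShcard T hT⟩
  have hShle : Sh.card ≤ n.choose l := hpc ▸ Finset.card_le_card hShsubP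
  have hcardSh : Sh.card = F.card + ∑ A ∈ F, (X A).card * l := by
    rw [hSheq, Finset.card_union_of_disjoint hFMdisj, hcardM]
  have hcardA0 : A0.card = n.choose l - Sh.card := by
    rw [hA0def, Finset.card_sdiff_of_subset hShsubP, hpc]
  have hdisjGA0 : Disjoint G A0 := by
    rw [Finset.disjoint_left]
    intro s hsG hsA0
    have := hGcard s hsG
    have := hA0card s hsA0
    omega
  refine ⟨⟨?_, hanti, ?_⟩, ?_⟩
  · intro s hs
    rcases Finset.mem_union.mp hs with hs | hs
    · exact hGsub s hs
    · exact hA0sub s hs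
  · intro B hB hBnot hanti'
    obtain ⟨C, hC, hCne, hcomp⟩ := hmax B hB hBnot
    rcases hcomp with h | h
    · exact hanti' (Set.mem_insert _ _)
        (Set.mem_insert_of_mem _ (Finset.mem_coe.mpr hC)) (Ne.symm hCne) h
    · exact hanti' (Set.mem_insert_of_mem _ (Finset.mem_coe.mpr hC))
        (Set.mem_insert _ _) hCne h
  · rw [Finset.card_union_of_disjoint hdisjGA0, Nat.cast_add, hcardG, hcardA0,
      Nat.cast_sub hShle, hcardSh]
    push_cast
    rw [← Finset.sum_mul]
    ring
end

section
/- Let n ≥ 6 and let G be the graph obtained from the complete graph K_n on vertex set [n] by deleting the perfect matching edges {n-1,1}, {n-2,2}, ..., {⌈(n+1)/2⌉, ⌈(n-2)/2⌉} (a matching with ⌈(n-2)/2⌉ edges). Then every edge of G lies in a triangle, the complement of G is triangle-free with line graph having no edges, and the corresponding maximal antichain (triangles of G together with non-edges of G) has size C(n,3) - (n-3)·⌈(n-2)/2⌉. -/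
/-- The matching `{n-1,1},{n-2,2},…,{⌈(n+1)/2⌉,⌈(n-2)/2⌉}` (with `⌈(n-2)/2⌉ = (n-1)/2` edges). -/
def matchingM (n : ℕ) : Finset (Finset ℕ) :=
  (Finset.Icc 1 ((n - 1) / 2)).image fun i => {n - i, i}

/-- Adjacency in the graph `G` obtained from `K_n` (on `[n]`) by deleting `matchingM n`. -/
def GAdj (n : ℕ) (x y : ℕ) : Prop :=
  x ≠ y ∧ x ∈ Finset.Icc 1 n ∧ y ∈ Finset.Icc 1 n ∧ ({x, y} : Finset ℕ) ∉ matchingM n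

instance (n x y : ℕ) : Decidable (GAdj n x y) := by
  unfold GAdj; infer_instance

lemma mem_matchingM {n : ℕ} {e : Finset ℕ} :
    e ∈ matchingM n ↔ ∃ i, (1 ≤ i ∧ i ≤ (n-1)/2) ∧ e = {n - i, i} := by
  simp [matchingM, Finset.mem_image, Finset.mem_Icc, eq_comm]

lemma matchingM_struct {n : ℕ} {e : Finset ℕ} (he : e ∈ matchingM n) :
    ∃ a b : ℕ, e = {a, b} ∧ 1 ≤ b ∧ b < a ∧ a + b = n := by
  obtain ⟨i, ⟨h1, h2⟩, rfl⟩ := mem_matchingM.mp he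
  exact ⟨n - i, i, rfl, h1, by omega, by omega⟩

lemma mem_matchingM_of {n a b : ℕ} (h1 : 1 ≤ b) (h2 : b < a) (h3 : a + b = n) :
    ({a, b} : Finset ℕ) ∈ matchingM n := by
  refine mem_matchingM.mpr ⟨b, ⟨h1, by omega⟩, by rw [show n - b = a by omega]⟩

lemma matchingM_card {n : ℕ} {e : Finset ℕ} (he : e ∈ matchingM n) : e.card = 2 := by
  obtain ⟨a, b, rfl, h1, h2, h3⟩ := matchingM_struct he
  rw [Finset.card_insert_of_notMem (by simp; omega), Finset.card_singleton]

lemma matchingM_subset {n : ℕ} {e : Finset ℕ} (he : e ∈ matchingM n) :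
    e ⊆ Finset.Icc 1 n := by
  obtain ⟨a, b, rfl, h1, h2, h3⟩ := matchingM_struct he
  intro x hx
  simp only [Finset.mem_insert, Finset.mem_singleton] at hx
  simp only [Finset.mem_Icc]
  omega

lemma matchingM_eq_of_shared {n : ℕ} {e f : Finset ℕ} (he : e ∈ matchingM n)
    (hf : f ∈ matchingM n) {x : ℕ} (hxe : x ∈ e) (hxf : x ∈ f) : e = f := by
  obtain ⟨a, b, rfl, h1, h2, h3⟩ := matchingM_struct he
  obtain ⟨c, d, rfl, g1, g2, g3⟩ := matchingM_struct hf
  simp only [Finset.mem_insert, Finset.mem_singleton] at hxe hxf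
  have hac : a = c ∧ b = d := by omega
  rw [hac.1, hac.2]

lemma pair_comm' (x y : ℕ) : ({x, y} : Finset ℕ) = {y, x} := Finset.pair_comm x y

lemma not_self_mem_matchingM {n x : ℕ} : ({x, x} : Finset ℕ) ∉ matchingM n := by
  intro h
  have := matchingM_card h
  simp at this

lemma partner_unique {n x z₁ z₂ : ℕ} (h1 : ({x, z₁} : Finset ℕ) ∈ matchingM n)
    (h2 : ({x, z₂} : Finset ℕ) ∈ matchingM n) : z₁ = z₂ := by
  have he := matchingM_eq_of_shared h1 h2 (Finset.mem_insert_self x _) (Finset.mem_insert_self x _)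
  have hz : z₁ ∈ ({x, z₂} : Finset ℕ) := he ▸ (by simp : z₁ ∈ ({x, z₁} : Finset ℕ))
  simp only [Finset.mem_insert, Finset.mem_singleton] at hz
  rcases hz with rfl | rfl
  · exact (not_self_mem_matchingM h1).elim
  · rfl

open Classical in
lemma exists_good {n : ℕ} (hn : 6 ≤ n) (x y : ℕ) :
    ∃ z ∈ Finset.Icc 1 n, z ≠ x ∧ z ≠ y ∧ ({x, z} : Finset ℕ) ∉ matchingM n ∧
      ({y, z} : Finset ℕ) ∉ matchingM n := by
  by_contra hc
  push_neg at hc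
  set px : ℕ := if h : ∃ w, ({x, w} : Finset ℕ) ∈ matchingM n then h.choose else 0 with hpx
  set py : ℕ := if h : ∃ w, ({y, w} : Finset ℕ) ∈ matchingM n then h.choose else 0 with hpy
  have hsub : Finset.Icc 1 n ⊆ ({x, y, px, py} : Finset ℕ) := by
    intro z hz
    simp only [Finset.mem_insert, Finset.mem_singleton]
    by_contra hzz
    push_neg at hzz
    obtain ⟨hz1, hz2, hz3, hz4⟩ := hzz
    rcases (by tauto : ({x, z} : Finset ℕ) ∈ matchingM n ∨ ({y, z} : Finset ℕ) ∈ matchingM n)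
      with h | h
    · have hex : ∃ w, ({x, w} : Finset ℕ) ∈ matchingM n := ⟨z, h⟩
      have : z = px := by
        rw [hpx, dif_pos hex]
        exact partner_unique h hex.choose_spec
      exact hz3 this
    · have hex : ∃ w, ({y, w} : Finset ℕ) ∈ matchingM n := ⟨z, h⟩
      have : z = py := by
        rw [hpy, dif_pos hex]
        exact partner_unique h hex.choose_spec
      exact hz4 this
  have := Finset.card_le_card hsub
  have h4 : ({x, y, px, py} : Finset ℕ).card ≤ 4 := by
    have h1 := Finset.card_insert_le x ({y, px, py} : Finset ℕ)
    have h2 := Finset.card_insert_le y ({px, py} : Finset ℕ)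
    have h3 := Finset.card_insert_le px ({py} : Finset ℕ)
    have h5 : ({py} : Finset ℕ).card = 1 := Finset.card_singleton _
    omega
  simp [Nat.card_Icc] at this
  omega

lemma exists_common_nbr {n : ℕ} (hn : 6 ≤ n) {x y : ℕ} (hx : x ∈ Finset.Icc 1 n)
    (hy : y ∈ Finset.Icc 1 n) : ∃ z, GAdj n x z ∧ GAdj n y z := by
  obtain ⟨z, hz, hzx, hzy, h1, h2⟩ := exists_good hn x y
  exact ⟨z, ⟨fun h => hzx h.symm, hx, hz, h1⟩, ⟨fun h => hzy h.symm, hy, hz, h2⟩⟩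

-- triangle characterization
lemma mem_T {n : ℕ} {s : Finset ℕ} :
    s ∈ (Finset.powersetCard 3 (Finset.Icc 1 n)).filter
        (fun s => ∀ x ∈ s, ∀ y ∈ s, x ≠ y → GAdj n x y) ↔
      s ⊆ Finset.Icc 1 n ∧ s.card = 3 ∧ ∀ x ∈ s, ∀ y ∈ s, x ≠ y → GAdj n x y := by
  simp only [Finset.mem_filter, Finset.mem_powersetCard]
  tauto

lemma GAdj_pair_not_mem {n x y : ℕ} (h : GAdj n x y) : ({x, y} : Finset ℕ) ∉ matchingM n :=
  h.2.2.2

lemma not_GAdj_mem {n x y : ℕ} (hx : x ∈ Finset.Icc 1 n) (hy : y ∈ Finset.Icc 1 n)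
    (hxy : x ≠ y) (h : ¬ GAdj n x y) : ({x, y} : Finset ℕ) ∈ matchingM n := by
  unfold GAdj at h
  tauto

lemma antichain_A {n : ℕ} :
    IsAntichain (· ⊆ ·)
      ((((Finset.powersetCard 3 (Finset.Icc 1 n)).filter
          (fun s => ∀ x ∈ s, ∀ y ∈ s, x ≠ y → GAdj n x y)) ∪ matchingM n :
          Finset (Finset ℕ)) : Set (Finset ℕ)) := by
  intro a ha b hb hab hsub
  simp only [Finset.coe_union, Set.mem_union, Finset.mem_coe] at ha hb
  rcases ha with ha | ha <;> rcases hb with hb | hb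
  · exact hab (Finset.eq_of_subset_of_card_le hsub
      (by rw [(mem_T.mp ha).2.1, (mem_T.mp hb).2.1]))
  · have h1 := (mem_T.mp ha).2.1
    have h2 := matchingM_card hb
    have := Finset.card_le_card hsub
    omega
  · obtain ⟨p, q, rfl, g1, g2, g3⟩ := matchingM_struct ha
    have hp : p ∈ b := hsub (by simp)
    have hq : q ∈ b := hsub (by simp)
    have := (mem_T.mp hb).2.2 p hp q hq (by omega)
    exact this.2.2.2 ha
  · exact hab (Finset.eq_of_subset_of_card_le hsub
      (by rw [matchingM_card ha, matchingM_card hb]))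

lemma maximal_A {n : ℕ} (hn : 6 ≤ n) (B : Finset ℕ) (hB : B ⊆ Finset.Icc 1 n)
    (hBA : B ∉ ((Finset.powersetCard 3 (Finset.Icc 1 n)).filter
          (fun s => ∀ x ∈ s, ∀ y ∈ s, x ≠ y → GAdj n x y)) ∪ matchingM n) :
    ¬ IsAntichain (· ⊆ ·)
      (insert B ((((Finset.powersetCard 3 (Finset.Icc 1 n)).filter
          (fun s => ∀ x ∈ s, ∀ y ∈ s, x ≠ y → GAdj n x y)) ∪ matchingM n :
          Finset (Finset ℕ)) : Set (Finset ℕ))) := by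
  set A := ((Finset.powersetCard 3 (Finset.Icc 1 n)).filter
      (fun s => ∀ x ∈ s, ∀ y ∈ s, x ≠ y → GAdj n x y)) ∪ matchingM n with hA
  suffices h : ∃ C ∈ A, C ≠ B ∧ (C ⊆ B ∨ B ⊆ C) by
    obtain ⟨C, hC, hCB, hor⟩ := h
    intro hanti
    have hCm : C ∈ insert B (A : Set (Finset ℕ)) := Set.mem_insert_iff.mpr (Or.inr hC)
    have hBm : B ∈ insert B (A : Set (Finset ℕ)) := Set.mem_insert _ _
    rcases hor with h | h
    · exact hanti hCm hBm hCB h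
    · exact hanti hBm hCm (Ne.symm hCB) h
  by_cases hc : B.card ≤ 2
  · -- extend B to a 2-element subset of Icc
    obtain ⟨B', hBB', hB'sub, hB'card⟩ :=
      Finset.exists_subsuperset_card_eq hB hc (by simp [Nat.card_Icc]; omega)
    obtain ⟨x, y, hxy, rfl⟩ := Finset.card_eq_two.mp hB'card
    have hx : x ∈ Finset.Icc 1 n := hB'sub (by simp)
    have hy : y ∈ Finset.Icc 1 n := hB'sub (by simp)
    by_cases hm : ({x, y} : Finset ℕ) ∈ matchingM n
    · refine ⟨{x, y}, Finset.mem_union_right _ hm, ?_, Or.inr hBB'⟩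
      intro h; rw [← h] at hBA; exact hBA (Finset.mem_union_right _ hm)
    · obtain ⟨z, hz, hzx, hzy, h1, h2⟩ := exists_good hn x y
      refine ⟨{x, y, z}, Finset.mem_union_left _ (mem_T.mpr ⟨?_, ?_, ?_⟩), ?_, ?_⟩
      · intro w hw
        simp only [Finset.mem_insert, Finset.mem_singleton] at hw
        rcases hw with rfl | rfl | rfl <;> assumption
      · rw [Finset.card_insert_of_notMem (by simp [hxy]; omega),
          Finset.card_insert_of_notMem (by simp; omega), Finset.card_singleton]
      · intro u hu v hv huv
        simp only [Finset.mem_insert, Finset.mem_singleton] at hu hv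
        have key : ∀ a b : ℕ, a ∈ Finset.Icc 1 n → b ∈ Finset.Icc 1 n → a ≠ b →
            ({a, b} : Finset ℕ) ∉ matchingM n → GAdj n a b :=
          fun a b ha hb hab hnm => ⟨hab, ha, hb, hnm⟩
        rcases hu with rfl | rfl | rfl <;> rcases hv with rfl | rfl | rfl
        · exact absurd rfl huv
        · exact key _ _ hx hy huv hm
        · exact key _ _ hx hz huv h1
        · exact key _ _ hy hx huv (by rw [pair_comm']; exact hm)
        · exact absurd rfl huv
        · exact key _ _ hy hz huv h2
        · exact key _ _ hz hx huv (by rw [pair_comm']; exact h1)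
        · exact key _ _ hz hy huv (by rw [pair_comm']; exact h2)
        · exact absurd rfl huv
      · intro h
        have : B.card = 3 := by
          rw [← h, Finset.card_insert_of_notMem (by simp [hxy]; omega),
            Finset.card_insert_of_notMem (by simp; omega), Finset.card_singleton]
        omega
      · exact Or.inr (hBB'.trans (by intro w hw; simp at hw ⊢; tauto))
  · push_neg at hc
    by_cases hm : ∃ x ∈ B, ∃ y ∈ B, x ≠ y ∧ ({x, y} : Finset ℕ) ∈ matchingM n
    · obtain ⟨x, hxB, y, hyB, hxy, hm⟩ := hm
      refine ⟨{x, y}, Finset.mem_union_right _ hm, ?_, Or.inl ?_⟩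
      · intro h
        have : B.card = 2 := by rw [← h]; exact matchingM_card hm
        omega
      · intro w hw; simp only [Finset.mem_insert, Finset.mem_singleton] at hw
        rcases hw with rfl | rfl <;> assumption
    · push_neg at hm
      obtain ⟨s, hsB, hscard⟩ := Finset.exists_subset_card_eq hc
      have hstri : ∀ u ∈ s, ∀ v ∈ s, u ≠ v → GAdj n u v := by
        intro u hu v hv huv
        exact ⟨huv, hB (hsB hu), hB (hsB hv), hm u (hsB hu) v (hsB hv) huv⟩
      refine ⟨s, Finset.mem_union_left _ (mem_T.mpr ⟨hsB.trans hB, hscard, hstri⟩), ?_,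
        Or.inl hsB⟩
      intro h
      apply hBA
      rw [← h]
      exact Finset.mem_union_left _ (mem_T.mpr ⟨hsB.trans hB, hscard, hstri⟩)

lemma card_matchingM {n : ℕ} (hn : 6 ≤ n) : (matchingM n).card = (n - 1) / 2 := by
  rw [matchingM, Finset.card_image_of_injOn, Nat.card_Icc]
  · omega
  · intro i hi j hj hij
    rw [Finset.mem_coe, Finset.mem_Icc] at hi
    rw [Finset.mem_coe, Finset.mem_Icc] at hj
    have hij' : ({n - i, i} : Finset ℕ) = {n - j, j} := hij
    have : i ∈ ({n - j, j} : Finset ℕ) := hij' ▸ (by simp : i ∈ ({n - i, i} : Finset ℕ))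
    simp only [Finset.mem_insert, Finset.mem_singleton] at this
    omega

lemma N_eq {n : ℕ} (hn : 6 ≤ n) :
    (Finset.powersetCard 3 (Finset.Icc 1 n)).filter
        (fun s => ¬ ∀ x ∈ s, ∀ y ∈ s, x ≠ y → GAdj n x y) =
      (matchingM n).biUnion
        (fun e => (Finset.Icc 1 n \ e).image (fun w => insert w e)) := by
  ext s
  simp only [Finset.mem_filter, Finset.mem_powersetCard, Finset.mem_biUnion, Finset.mem_image,
    Finset.mem_sdiff]
  constructor
  · rintro ⟨⟨hsub, hcard⟩, hnt⟩
    push_neg at hnt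
    obtain ⟨x, hx, y, hy, hxy, hng⟩ := hnt
    have he : ({x, y} : Finset ℕ) ∈ matchingM n := not_GAdj_mem (hsub hx) (hsub hy) hxy hng
    have hes : ({x, y} : Finset ℕ) ⊆ s := by
      intro w hw; simp only [Finset.mem_insert, Finset.mem_singleton] at hw
      rcases hw with rfl | rfl <;> assumption
    have hcd : (s \ ({x, y} : Finset ℕ)).card = 1 := by
      rw [Finset.card_sdiff_of_subset hes, hcard, matchingM_card he]
    obtain ⟨w, hw⟩ := Finset.card_eq_one.mp hcd
    have hwmem : w ∈ s \ ({x, y} : Finset ℕ) := hw ▸ Finset.mem_singleton_self w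
    rw [Finset.mem_sdiff] at hwmem
    refine ⟨{x, y}, he, w, ⟨hsub hwmem.1, hwmem.2⟩, ?_⟩
    have := Finset.union_sdiff_of_subset hes
    rw [hw] at this
    rw [← this, Finset.insert_eq, Finset.union_comm]
  · rintro ⟨e, he, w, ⟨hw1, hw2⟩, rfl⟩
    have hesub := matchingM_subset he
    refine ⟨⟨?_, ?_⟩, ?_⟩
    · intro u hu
      rcases Finset.mem_insert.mp hu with rfl | hu
      · exact hw1
      · exact hesub hu
    · rw [Finset.card_insert_of_notMem hw2, matchingM_card he]
    · intro hpred
      obtain ⟨a, b, rfl, g1, g2, g3⟩ := matchingM_struct he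
      have ha : a ∈ insert w ({a, b} : Finset ℕ) := by simp
      have hb : b ∈ insert w ({a, b} : Finset ℕ) := by simp
      exact (hpred a ha b hb (by omega)).2.2.2 he

lemma card_N {n : ℕ} (hn : 6 ≤ n) :
    ((Finset.powersetCard 3 (Finset.Icc 1 n)).filter
        (fun s => ¬ ∀ x ∈ s, ∀ y ∈ s, x ≠ y → GAdj n x y)).card = (n - 1) / 2 * (n - 2) := by
  rw [N_eq hn, Finset.card_biUnion]
  · have : ∀ e ∈ matchingM n,
        ((Finset.Icc 1 n \ e).image (fun w => insert w e)).card = n - 2 := by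
      intro e he
      rw [Finset.card_image_of_injOn, Finset.card_sdiff_of_subset (matchingM_subset he),
        Nat.card_Icc, matchingM_card he]
      · omega
      · intro w hw v hv hwv
        rw [Finset.mem_coe, Finset.mem_sdiff] at hw hv
        have hwv' : insert w e = insert v e := hwv
        have : w ∈ insert v e := hwv' ▸ Finset.mem_insert_self w e
        rcases Finset.mem_insert.mp this with rfl | h
        · rfl
        · exact absurd h hw.2
    rw [Finset.sum_congr rfl this, Finset.sum_const, card_matchingM hn, smul_eq_mul]
  · intro e he f hf hef
    rw [Function.onFun, Finset.disjoint_left]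
    rintro s hs hs'
    simp only [Finset.mem_image, Finset.mem_sdiff] at hs hs'
    obtain ⟨w, ⟨hw1, hw2⟩, rfl⟩ := hs
    obtain ⟨v, ⟨hv1, hv2⟩, heq⟩ := hs'
    have hesub : e ⊆ insert w e := Finset.subset_insert w e
    have hfsub : f ⊆ insert w e := heq ▸ Finset.subset_insert v f
    have hdisj : Disjoint e f := by
      rw [Finset.disjoint_left]
      intro x hxe hxf
      exact hef (matchingM_eq_of_shared he hf hxe hxf)
    have h4 : (e ∪ f).card = 4 := by
      rw [Finset.card_union_of_disjoint hdisj, matchingM_card he, matchingM_card hf]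
    have hsub : e ∪ f ⊆ insert w e := Finset.union_subset hesub hfsub
    have := Finset.card_le_card hsub
    rw [h4, Finset.card_insert_of_notMem hw2, matchingM_card he] at this
    omega

theorem stmt_11 (n : ℕ) (hn : 6 ≤ n) :
    -- every edge of G lies in a triangle
    (∀ x y : ℕ, GAdj n x y → ∃ z : ℕ, GAdj n x z ∧ GAdj n y z) ∧
    -- the complement of G (within [n]) is triangle-free
    (¬ ∃ s ∈ Finset.powersetCard 3 (Finset.Icc 1 n),
        ∀ x ∈ s, ∀ y ∈ s, x ≠ y → ({x, y} : Finset ℕ) ∈ matchingM n) ∧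
    -- the line graph of the complement has no edges: distinct matching edges are disjoint
    (∀ e ∈ matchingM n, ∀ f ∈ matchingM n, e ≠ f → e ∩ f = ∅) ∧
    -- the corresponding antichain (triangles of G together with non-edges of G)
    -- is a maximal antichain of size C(n,3) - (n-3)⌈(n-2)/2⌉
    IsMaximalAntichainIn n
        (((Finset.powersetCard 3 (Finset.Icc 1 n)).filter
            (fun s => ∀ x ∈ s, ∀ y ∈ s, x ≠ y → GAdj n x y)) ∪ matchingM n) ∧
    ((((Finset.powersetCard 3 (Finset.Icc 1 n)).filter
            (fun s => ∀ x ∈ s, ∀ y ∈ s, x ≠ y → GAdj n x y)) ∪ matchingM n).card : ℤ) =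
      (n.choose 3 : ℤ) - ((n : ℤ) - 3) * ((n - 1) / 2 : ℕ) := by
  refine ⟨?_, ?_, ?_, ⟨?_, antichain_A, fun B hB hBA => maximal_A hn B hB hBA⟩, ?_⟩
  · intro x y h
    exact exists_common_nbr hn h.2.1 h.2.2.1
  · rintro ⟨s, hs, hall⟩
    rw [Finset.mem_powersetCard] at hs
    obtain ⟨x, y, z, hxy, hxz, hyz, rfl⟩ := Finset.card_eq_three.mp hs.2
    have h1 := hall x (by simp) y (by simp) hxy
    have h2 := hall x (by simp) z (by simp) hxz
    exact hyz (partner_unique h1 h2)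
  · intro e he f hf hef
    rw [Finset.eq_empty_iff_forall_notMem]
    intro x hx
    rw [Finset.mem_inter] at hx
    exact hef (matchingM_eq_of_shared he hf hx.1 hx.2)
  · intro s hs
    rcases Finset.mem_union.mp hs with h | h
    · exact (mem_T.mp h).1
    · exact matchingM_subset h
  · set T := (Finset.powersetCard 3 (Finset.Icc 1 n)).filter
      (fun s => ∀ x ∈ s, ∀ y ∈ s, x ≠ y → GAdj n x y) with hT
    have hTN : T.card + ((Finset.powersetCard 3 (Finset.Icc 1 n)).filter
        (fun s => ¬ ∀ x ∈ s, ∀ y ∈ s, x ≠ y → GAdj n x y)).card =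
        (Finset.powersetCard 3 (Finset.Icc 1 n)).card :=
      Finset.card_filter_add_card_filter_not _
    have hP : (Finset.powersetCard 3 (Finset.Icc 1 n)).card = n.choose 3 := by
      rw [Finset.card_powersetCard, Nat.card_Icc]
      norm_num
    have hU : (T ∪ matchingM n).card = T.card + (matchingM n).card := by
      apply Finset.card_union_of_disjoint
      rw [Finset.disjoint_left]
      intro s hsT hsM
      have := (mem_T.mp hsT).2.1
      have := matchingM_card hsM
      omega
    have hN := card_N hn
    have hM := card_matchingM hn
    have key : (T ∪ matchingM n).card + (n - 1) / 2 * (n - 2) =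
        n.choose 3 + (n - 1) / 2 := by
      obtain ⟨q, hq⟩ : ∃ q, (n - 1) / 2 * (n - 2) = q := ⟨_, rfl⟩
      rw [hq] at hN ⊢
      omega
    obtain ⟨m, hm⟩ : ∃ m, (n - 1) / 2 = m := ⟨_, rfl⟩
    rw [hm] at key ⊢
    have key' := congrArg (Nat.cast : ℕ → ℤ) key
    push_cast [Nat.cast_sub (show 2 ≤ n by omega)] at key'
    linear_combination key'
end

section
/- For every n ≥ 6, the family F = {{1,2,3},{1,2,4},{3,5,6},{4,5,6}} together with all 2-subsets of [n] not contained in any member of F is a maximal antichain in B_n, contained in C([n],2) ∪ C([n],3), of size C(n,2) - 6. -/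
open Finset

private abbrev Fam : Finset (Finset ℕ) := {{1, 2, 3}, {1, 2, 4}, {3, 5, 6}, {4, 5, 6}}

private lemma Fcard : ∀ T ∈ Fam, T.card = 3 := by decide

private lemma Fsub6 : ∀ T ∈ Fam, T ⊆ Finset.Icc 1 6 := by decide

private lemma key_s13 : ∀ B ∈ (Finset.Icc 1 6).powerset,
    (B ∈ Fam ∨ (B.card = 2 ∧ ∀ T ∈ Fam, ¬ B ⊆ T)) ∨
    (∃ T ∈ Fam, B ⊆ T ∧ B ≠ T) ∨
    (∃ p ∈ (Finset.Icc 1 6).powersetCard 2, p ⊆ B ∧ p ≠ B ∧ ∀ T ∈ Fam, ¬ p ⊆ T) := by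
  decide

private lemma shadow_card :
    (((Finset.Icc 1 6).powersetCard 2).filter
      (fun s => ¬ ∀ T ∈ Fam, ¬ s ⊆ T)).card = 10 := by decide


theorem stmt_13 (n : ℕ) (hn : 6 ≤ n) :
    IsMaximalAntichainIn n
        (({{1, 2, 3}, {1, 2, 4}, {3, 5, 6}, {4, 5, 6}} : Finset (Finset ℕ)) ∪
          (Finset.powersetCard 2 (Finset.Icc 1 n)).filter
            (fun s => ∀ T ∈ ({{1, 2, 3}, {1, 2, 4}, {3, 5, 6}, {4, 5, 6}} :
                Finset (Finset ℕ)), ¬ s ⊆ T)) ∧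
      ((({{1, 2, 3}, {1, 2, 4}, {3, 5, 6}, {4, 5, 6}} : Finset (Finset ℕ)) ∪
          (Finset.powersetCard 2 (Finset.Icc 1 n)).filter
            (fun s => ∀ T ∈ ({{1, 2, 3}, {1, 2, 4}, {3, 5, 6}, {4, 5, 6}} :
                Finset (Finset ℕ)), ¬ s ⊆ T)).card : ℤ) = (n.choose 2 : ℤ) - 6 := by
  have hsub6n : Finset.Icc 1 6 ⊆ Finset.Icc 1 n := Finset.Icc_subset_Icc le_rfl hn
  set G : Finset (Finset ℕ) := (Finset.powersetCard 2 (Finset.Icc 1 n)).filter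
      (fun s => ∀ T ∈ ({{1, 2, 3}, {1, 2, 4}, {3, 5, 6}, {4, 5, 6}} :
          Finset (Finset ℕ)), ¬ s ⊆ T) with hG
  set A : Finset (Finset ℕ) := Fam ∪ G with hA
  have hGmem : ∀ s, s ∈ G ↔ (s ⊆ Finset.Icc 1 n ∧ s.card = 2 ∧ ∀ T ∈ Fam, ¬ s ⊆ T) := by
    intro s
    rw [hG, Finset.mem_filter, Finset.mem_powersetCard]
    tauto
  refine ⟨⟨?_, ?_, ?_⟩, ?_⟩
  · -- all members inside Icc 1 n
    intro s hs
    rcases Finset.mem_union.1 hs with h | h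
    · exact (Fsub6 s h).trans hsub6n
    · exact ((hGmem s).1 h).1
  · -- antichain
    intro s hs t ht hne hsub
    rw [Finset.mem_coe] at hs ht
    rcases Finset.mem_union.1 hs with h | h <;> rcases Finset.mem_union.1 ht with h' | h'
    · exact hne (Finset.eq_of_subset_of_card_le hsub (by rw [Fcard s h, Fcard t h']))
    · have h1 := ((hGmem t).1 h').2.1
      have h2 := Fcard s h
      have := Finset.card_le_card hsub
      omega
    · exact ((hGmem s).1 h).2.2 t h' hsub
    · have h1 := ((hGmem s).1 h).2.1
      have h2 := ((hGmem t).1 h').2.1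
      exact hne (Finset.eq_of_subset_of_card_le hsub (by omega))
  · -- maximality
    intro B hB hBA hanti
    have hBins : B ∈ insert B (A : Set (Finset ℕ)) := Set.mem_insert _ _
    by_cases h7 : ∃ x ∈ B, 7 ≤ x
    · obtain ⟨x, hxB, hx7⟩ := h7
      have hxn : x ∈ Finset.Icc 1 n := hB hxB
      have hxnot6 : ∀ T ∈ Fam, x ∉ T := by
        intro T hT hxT
        have := Fsub6 T hT hxT
        simp [Finset.mem_Icc] at this
        omega
      by_cases hy : ∃ y ∈ B, y ≠ x
      · obtain ⟨y, hyB, hyx⟩ := hy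
        have hpA : ({x, y} : Finset ℕ) ∈ A := by
          refine Finset.mem_union_right _ ((hGmem _).2 ⟨?_, ?_, ?_⟩)
          · intro z hz
            simp only [Finset.mem_insert, Finset.mem_singleton] at hz
            rcases hz with rfl | rfl
            · exact hxn
            · exact hB hyB
          · rw [Finset.card_insert_of_notMem (by simp [Ne.symm hyx]), Finset.card_singleton]
          · intro T hT hsub
            exact hxnot6 T hT (hsub (by simp))
        refine hanti (Set.mem_insert_of_mem _ hpA) hBins ?_ ?_
        · intro h; rw [h] at hpA; exact hBA hpA
        · intro z hz
          simp only [Finset.mem_insert, Finset.mem_singleton] at hz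
          rcases hz with rfl | rfl
          · exact hxB
          · exact hyB
      · push_neg at hy
        have hBx : B = {x} := by
          apply Finset.Subset.antisymm
          · intro z hz; simp [hy z hz]
          · intro z hz; simp only [Finset.mem_singleton] at hz; subst hz; exact hxB
        have hpA : ({1, x} : Finset ℕ) ∈ A := by
          refine Finset.mem_union_right _ ((hGmem _).2 ⟨?_, ?_, ?_⟩)
          · intro z hz
            simp only [Finset.mem_insert, Finset.mem_singleton] at hz
            rcases hz with rfl | rfl
            · simp [Finset.mem_Icc]; omega
            · exact hxn
          · rw [Finset.card_insert_of_notMem (by simp; omega), Finset.card_singleton]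
          · intro T hT hsub
            exact hxnot6 T hT (hsub (by simp))
        refine hanti hBins (Set.mem_insert_of_mem _ hpA) ?_ ?_
        · intro h; rw [h] at hBA; exact hBA hpA
        · rw [hBx]; intro z hz; simp only [Finset.mem_singleton] at hz; subst hz; simp
    · push_neg at h7
      have hB6 : B ∈ (Finset.Icc 1 6).powerset := by
        rw [Finset.mem_powerset]
        intro z hz
        have := hB hz
        simp only [Finset.mem_Icc] at this ⊢
        exact ⟨this.1, by have := h7 z hz; omega⟩
      rcases key_s13 B hB6 with hin | ⟨T, hT, hsub, hne⟩ | ⟨p, hp, hsub, hne, hpred⟩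
      · apply hBA
        rcases hin with h | ⟨hc, hpred⟩
        · exact Finset.mem_union_left _ h
        · exact Finset.mem_union_right _ ((hGmem _).2 ⟨hB, hc, hpred⟩)
      · exact hanti hBins (Set.mem_insert_of_mem _ (Finset.mem_union_left _ hT)) hne hsub
      · have hpA : p ∈ A := by
          rw [Finset.mem_powersetCard] at hp
          exact Finset.mem_union_right _ ((hGmem _).2 ⟨hp.1.trans hsub6n, hp.2, hpred⟩)
        exact hanti (Set.mem_insert_of_mem _ hpA) hBins hne hsub
  · -- cardinality
    have hdisj : Disjoint Fam G := by
      rw [Finset.disjoint_left]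
      intro s hs hs'
      have := Fcard s hs
      have := ((hGmem s).1 hs').2.1
      omega
    have hcard : A.card = Fam.card + G.card := Finset.card_union_of_disjoint hdisj
    have hFc : Fam.card = 4 := by decide
    have hP : ((Finset.Icc 1 n).powersetCard 2).card = n.choose 2 := by
      rw [Finset.card_powersetCard, Nat.card_Icc]
      simp
    have hsplit := Finset.card_filter_add_card_filter_not
      (s := (Finset.Icc 1 n).powersetCard 2)
      (p := fun s => ∀ T ∈ ({{1, 2, 3}, {1, 2, 4}, {3, 5, 6}, {4, 5, 6}} :
          Finset (Finset ℕ)), ¬ s ⊆ T)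
    have hneg : ((Finset.Icc 1 n).powersetCard 2).filter
        (fun s => ¬ ∀ T ∈ ({{1, 2, 3}, {1, 2, 4}, {3, 5, 6}, {4, 5, 6}} :
            Finset (Finset ℕ)), ¬ s ⊆ T) =
        ((Finset.Icc 1 6).powersetCard 2).filter
        (fun s => ¬ ∀ T ∈ Fam, ¬ s ⊆ T) := by
      ext s
      simp only [Finset.mem_filter, Finset.mem_powersetCard]
      constructor
      · rintro ⟨⟨hsn, hc⟩, hpred⟩
        push_neg at hpred
        obtain ⟨T, hT, hsT⟩ := hpred
        refine ⟨⟨hsT.trans (Fsub6 T hT), hc⟩, ?_⟩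
        push_neg
        exact ⟨T, hT, hsT⟩
      · rintro ⟨⟨hs6, hc⟩, hpred⟩
        exact ⟨⟨hs6.trans hsub6n, hc⟩, hpred⟩
    rw [hneg, shadow_card] at hsplit
    have h15 : 15 ≤ n.choose 2 := by
      have := Nat.choose_le_choose 2 hn
      simpa [show Nat.choose 6 2 = 15 by decide] using this
    rw [hcard, hFc]
    rw [hP] at hsplit
    have : G.card = n.choose 2 - 10 := by
      have hGc : G.card + 10 = n.choose 2 := by rw [hG]; exact hsplit
      omega
    rw [this]
    push_cast [Nat.cast_sub (by omega : 10 ≤ n.choose 2)]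
    ring
end

section
/- Let n ≥ 3, t ≤ ⌈n/2⌉ - 1 with n odd, n = 2k-1. If there exists a forest F' on n-2t vertices with ⌈(n-2t-2)/2⌉ edges and exactly j pairs of adjacent edges, and F' has a leaf, then there exists a forest F on n vertices with ⌈(n-2)/2⌉ edges and exactly j + C(t+1, 2) pairs of adjacent edges (obtained by adding 2t new vertices and joining a leaf of F' to t of them). -/
/-- Number of pairs of adjacent edges of `G`, i.e. the number of edges of the line graph. -/
noncomputable def adjacentEdgePairs {V : Type*} (G : SimpleGraph V) : ℕ :=
  {p : Sym2 V × Sym2 V |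
      p.1 ∈ G.edgeSet ∧ p.2 ∈ G.edgeSet ∧ p.1 ≠ p.2 ∧ ∃ v, v ∈ p.1 ∧ v ∈ p.2}.ncard / 2

open SimpleGraph

def pairSet {V : Type*} (G : SimpleGraph V) : Set (Sym2 V × Sym2 V) :=
  {p | p.1 ∈ G.edgeSet ∧ p.2 ∈ G.edgeSet ∧ p.1 ≠ p.2 ∧ ∃ v, v ∈ p.1 ∧ v ∈ p.2}

lemma adjacentEdgePairs_eq {V : Type*} (G : SimpleGraph V) :
    adjacentEdgePairs G = (pairSet G).ncard / 2 := rfl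

/-- Add a star centered at `c` towards all vertices of `S`. -/
def starAdd {V : Type*} (G : SimpleGraph V) (c : V) (S : Finset V) :
    SimpleGraph V where
  Adj a b := a ≠ b ∧ (G.Adj a b ∨ (a = c ∧ b ∈ S) ∨ (a ∈ S ∧ b = c))
  symm := ⟨by
    rintro a b ⟨hne, h | ⟨h1, h2⟩ | ⟨h1, h2⟩⟩
    · exact ⟨hne.symm, Or.inl h.symm⟩
    · exact ⟨hne.symm, Or.inr (Or.inr ⟨h2, h1⟩)⟩
    · exact ⟨hne.symm, Or.inr (Or.inl ⟨h2, h1⟩)⟩⟩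
  loopless := ⟨fun a h => h.1 rfl⟩


lemma starAdd_adj {V : Type*} (G : SimpleGraph V) (c : V) (S : Finset V) (a b : V) :
    (starAdd G c S).Adj a b ↔ a ≠ b ∧ (G.Adj a b ∨ (a = c ∧ b ∈ S) ∨ (a ∈ S ∧ b = c)) :=
  Iff.rfl

/-- Adding a pendant edge `c - w` (with `w` isolated) to an acyclic graph keeps it acyclic. -/
lemma pendant_acyclic {V : Type*} [DecidableEq V] {G G' : SimpleGraph V}
    (hG : G.IsAcyclic) {c w : V} (hcw : c ≠ w) (hw : ∀ x, ¬ G.Adj w x)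
    (hadj : ∀ a b, G'.Adj a b ↔ G.Adj a b ∨ (a = c ∧ b = w) ∨ (a = w ∧ b = c)) :
    G'.IsAcyclic := by
  intro x p hp
  by_cases he : s(c, w) ∈ p.edges
  · have hwsup : w ∈ p.support := p.snd_mem_support_of_mem_edges he
    have hq := hp.rotate hwsup
    generalize hqd : p.rotate w hwsup = q at hq
    cases q with
    | nil => exact hq.ne_nil rfl
    | @cons _ y _ h r =>
      have hy : c = y := by
        rcases (hadj w y).1 h with h1 | ⟨h1, _⟩ | ⟨_, h1⟩
        · exact absurd h1 (hw y)
        · exact absurd h1.symm hcw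
        · exact h1.symm
      subst hy
      obtain ⟨z, h2, r2, hr⟩ := r.reverse.exists_eq_cons_of_ne (Ne.symm hcw)
      have hz : c = z := by
        rcases (hadj w z).1 h2 with h1 | ⟨h1, _⟩ | ⟨_, h1⟩
        · exact absurd h1 (hw z)
        · exact absurd h1.symm hcw
        · exact h1.symm
      subst hz
      have hmem : s(w, c) ∈ r.edges := by
        have : s(w, c) ∈ r.reverse.edges := by rw [hr]; simp
        simpa using this
      have hnd := hq.edges_nodup
      rw [SimpleGraph.Walk.edges_cons] at hnd
      exact (List.nodup_cons.mp hnd).1 hmem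
  · have hsub : ∀ e ∈ p.edges, e ∈ G.edgeSet := by
      intro e hep
      have heG' := p.edges_subset_edgeSet hep
      revert hep heG'
      induction e using Sym2.ind with
      | _ a b =>
        intro hep heG'
        rw [SimpleGraph.mem_edgeSet] at heG' ⊢
        rcases (hadj a b).1 heG' with h1 | ⟨rfl, rfl⟩ | ⟨rfl, rfl⟩
        · exact h1
        · exact absurd hep he
        · exact absurd (by rwa [Sym2.eq_swap] at hep) he
    exact hG (p.transfer G hsub) (hp.transfer hsub)

lemma starAdd_acyclic {V : Type*} [DecidableEq V] {G : SimpleGraph V} (hG : G.IsAcyclic)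
    (c : V) (S : Finset V) (hc : c ∉ S) (hiso : ∀ w ∈ S, ∀ x, ¬ G.Adj w x) :
    (starAdd G c S).IsAcyclic := by
  revert hc hiso
  induction S using Finset.induction_on with
  | empty =>
    have hEq : starAdd G c ∅ = G := by
      ext a b
      constructor
      · rintro ⟨hne, h | ⟨_, h⟩ | ⟨h, _⟩⟩
        · exact h
        · exact absurd h (Finset.notMem_empty b)
        · exact absurd h (Finset.notMem_empty a)
      · intro h; exact ⟨h.ne, Or.inl h⟩
    intro _ _; rwa [hEq]
  | @insert w S' hwS ih =>
    intro hc hiso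
    have hcw : c ≠ w := fun h => hc (h ▸ Finset.mem_insert_self w S')
    have hc' : c ∉ S' := fun h => hc (Finset.mem_insert_of_mem h)
    have hG' := ih hc' (fun x hx => hiso x (Finset.mem_insert_of_mem hx))
    have hwiso : ∀ x, ¬ (starAdd G c S').Adj w x := by
      rintro x ⟨hne, h | ⟨h1, _⟩ | ⟨h1, _⟩⟩
      · exact hiso w (Finset.mem_insert_self w S') x h
      · exact hcw h1.symm
      · exact hwS h1
    refine pendant_acyclic hG' hcw hwiso ?_
    intro a b
    constructor
    · rintro ⟨hne, h | ⟨rfl, hb⟩ | ⟨ha, rfl⟩⟩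
      · exact Or.inl ⟨hne, Or.inl h⟩
      · rcases Finset.mem_insert.mp hb with rfl | hb
        · exact Or.inr (Or.inl ⟨rfl, rfl⟩)
        · exact Or.inl ⟨hne, Or.inr (Or.inl ⟨rfl, hb⟩)⟩
      · rcases Finset.mem_insert.mp ha with rfl | ha
        · exact Or.inr (Or.inr ⟨rfl, rfl⟩)
        · exact Or.inl ⟨hne, Or.inr (Or.inr ⟨ha, rfl⟩)⟩
    · rintro (⟨hne, h | ⟨rfl, hb⟩ | ⟨ha, rfl⟩⟩ | ⟨rfl, rfl⟩ | ⟨rfl, rfl⟩)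
      · exact ⟨hne, Or.inl h⟩
      · exact ⟨hne, Or.inr (Or.inl ⟨rfl, Finset.mem_insert_of_mem hb⟩)⟩
      · exact ⟨hne, Or.inr (Or.inr ⟨Finset.mem_insert_of_mem ha, rfl⟩)⟩
      · exact ⟨hcw, Or.inr (Or.inl ⟨rfl, Finset.mem_insert_self _ _⟩)⟩
      · exact ⟨hcw.symm, Or.inr (Or.inr ⟨Finset.mem_insert_self _ _, rfl⟩)⟩

lemma map_isAcyclic {V W : Type*} (f : V ↪ W) {G : SimpleGraph V} (hG : G.IsAcyclic) :
    (G.map f).IsAcyclic := by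
  have pull : ∀ {x y : W} (p : (G.map f).Walk x y) (a b : V), f a = x → f b = y →
      ∃ p' : G.Walk a b, p.edges = p'.edges.map (Sym2.map f) ∧
        p.support = p'.support.map f := by
    intro x y p
    induction p with
    | nil =>
      intro a b ha hb
      have hab : a = b := f.injective (ha.trans hb.symm)
      subst hab
      exact ⟨.nil, by simp, by simp [ha]⟩
    | @cons _ z _ h q ih =>
      intro a b ha hb
      obtain ⟨a', c', hadj, hfa, hfc⟩ := (SimpleGraph.map_adj f G _ _).mp h
      have haa : a' = a := f.injective (hfa.trans ha.symm)
      subst haa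
      obtain ⟨p', he, hs⟩ := ih c' b hfc hb
      refine ⟨.cons hadj p', ?_, ?_⟩
      · simp [he, ← hfa, ← hfc, Sym2.map_pair_eq]
      · simp [hs, ← hfa]
  intro x p hp
  cases p with
  | nil => exact hp.ne_nil rfl
  | @cons _ z _ h q =>
    obtain ⟨a', c', hadj, hfa, hfc⟩ := (SimpleGraph.map_adj f G _ _).mp h
    obtain ⟨p', he, hs⟩ := pull (SimpleGraph.Walk.cons h q) a' a' hfa hfa
    refine hG p' ?_
    rw [SimpleGraph.Walk.isCycle_def, SimpleGraph.Walk.isTrail_def] at hp ⊢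
    obtain ⟨hnd, hnil, hsup⟩ := hp
    refine ⟨?_, ?_, ?_⟩
    · rw [he] at hnd
      exact hnd.of_map _
    · intro hcon
      subst hcon
      simp at he
    · rw [hs, ← List.map_tail] at hsup
      exact hsup.of_map _

theorem stmt_14 (n t j : ℕ) (hn : 3 ≤ n) (hodd : Odd n) (ht : t ≤ (n + 1) / 2 - 1)
    (F' : SimpleGraph (Fin (n - 2 * t))) (hforest : F'.IsAcyclic)
    (hedges : F'.edgeSet.ncard = (n - 2 * t - 1) / 2)
    (hpairs : adjacentEdgePairs F' = j)
    (hleaf : ∃ v : Fin (n - 2 * t), {w | F'.Adj v w}.ncard = 1) :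
    ∃ F : SimpleGraph (Fin n), F.IsAcyclic ∧ F.edgeSet.ncard = (n - 1) / 2 ∧
      adjacentEdgePairs F = j + (t + 1).choose 2 := by
  classical
  obtain ⟨k, hk⟩ := hodd
  have h2t : 2 * t + 1 ≤ n := by omega
  have hmn : n - 2 * t ≤ n := Nat.sub_le _ _
  obtain ⟨v, hv⟩ := hleaf
  obtain ⟨u, hu⟩ := Set.ncard_eq_one.mp hv
  have huv : F'.Adj v u := by
    have h1 : u ∈ {w | F'.Adj v w} := by rw [hu]; exact Set.mem_singleton u
    exact h1
  set emb : Fin (n - 2 * t) ↪ Fin n := Fin.castLEEmb hmn with hembd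
  set G1 : SimpleGraph (Fin n) := F'.map emb with hG1d
  set c : Fin n := emb v with hcd
  have hcm : c.1 < (n - 2 * t) := v.2
  set S : Finset (Fin n) :=
    Finset.image (fun i : Fin t => (⟨(n - 2 * t) + i.1, by have := i.2; omega⟩ : Fin n)) Finset.univ
    with hSd
  have hSmem : ∀ w ∈ S, (n - 2 * t) ≤ w.1 := by
    intro w hw
    simp only [hSd, Finset.mem_image, Finset.mem_univ, true_and] at hw
    obtain ⟨i, rfl⟩ := hw
    exact Nat.le_add_right _ _
  have hScard : S.card = t := by
    rw [hSd, Finset.card_image_of_injective _ ?_, Finset.card_univ, Fintype.card_fin]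
    intro i jj hij
    have h1 : (n - 2 * t) + i.1 = (n - 2 * t) + jj.1 := congrArg Fin.val hij
    exact Fin.ext (by omega)
  have hcS : c ∉ S := fun h => absurd (hSmem c h) (by omega)
  -- G1 facts
  have hG1small : ∀ x y : Fin n, G1.Adj x y → x.1 < (n - 2 * t) ∧ y.1 < (n - 2 * t) := by
    intro x y hxy
    obtain ⟨a, b, _, ha, hb⟩ := (SimpleGraph.map_adj emb F' x y).mp hxy
    subst ha; subst hb
    exact ⟨a.2, b.2⟩
  have hedge_small : ∀ e ∈ G1.edgeSet, ∀ x, x ∈ e → x.1 < (n - 2 * t) := by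
    intro e he
    revert he
    induction e using Sym2.ind with
    | _ a b =>
      intro he x hx
      rw [SimpleGraph.mem_edgeSet] at he
      rcases Sym2.mem_iff.mp hx with rfl | rfl
      · exact (hG1small _ _ he).1
      · exact (hG1small _ _ he).2
  have hcnbr : ∀ y, G1.Adj c y → y = emb u := by
    intro y hy
    obtain ⟨a, b, hab, ha, hb⟩ := (SimpleGraph.map_adj emb F' c y).mp hy
    have hav : a = v := emb.injective (by rwa [hcd] at ha)
    rw [hav] at hab
    have hbu : b ∈ {w | F'.Adj v w} := hab
    rw [hu, Set.mem_singleton_iff] at hbu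
    rw [← hb, hbu]
  have hG1acyc : G1.IsAcyclic := by rw [hG1d]; exact map_isAcyclic emb hforest
  have hG1edges : G1.edgeSet = Sym2.map emb '' F'.edgeSet := by
    ext e
    constructor
    · intro he
      revert he
      induction e using Sym2.ind with
      | _ x y =>
        intro he
        rw [SimpleGraph.mem_edgeSet] at he
        obtain ⟨a, b, hab, ha, hb⟩ := (SimpleGraph.map_adj emb F' x y).mp he
        exact ⟨s(a, b), hab, by rw [Sym2.map_pair_eq, ha, hb]⟩
    · rintro ⟨e', he', rfl⟩
      revert he'
      induction e' using Sym2.ind with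
      | _ a b =>
        intro he'
        rw [Sym2.map_pair_eq, SimpleGraph.mem_edgeSet]
        exact (SimpleGraph.map_adj emb F' _ _).mpr ⟨a, b, he', rfl, rfl⟩
  have hG1card : G1.edgeSet.ncard = ((n - 2 * t) - 1) / 2 := by
    rw [hG1edges, Set.ncard_image_of_injective _ (Sym2.map.injective emb.injective)]
    exact hedges
  -- the graph F
  set F : SimpleGraph (Fin n) := starAdd G1 c S with hFd
  have hFacyc : F.IsAcyclic := by
    rw [hFd]
    exact starAdd_acyclic hG1acyc c S hcS
      (fun w hw x hx => absurd (hG1small w x hx).1 (by have := hSmem w hw; omega))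
  have hinj_sc : Function.Injective (fun w : Fin n => s(c, w)) := by
    intro w1 w2 h
    simp only [Sym2.eq_iff] at h
    rcases h with ⟨-, h⟩ | ⟨h1, h2⟩
    · exact h
    · exact h2.trans h1
  set NE : Set (Sym2 (Fin n)) := (fun w : Fin n => s(c, w)) '' ↑S with hNEd
  have hFedges : F.edgeSet = G1.edgeSet ∪ NE := by
    ext e
    induction e using Sym2.ind with
    | _ a b =>
      rw [SimpleGraph.mem_edgeSet, hFd, starAdd_adj, Set.mem_union]
      constructor
      · rintro ⟨hne, h | ⟨rfl, hb⟩ | ⟨ha, rfl⟩⟩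
        · exact Or.inl ((SimpleGraph.mem_edgeSet _).mpr h)
        · exact Or.inr ⟨b, hb, rfl⟩
        · exact Or.inr ⟨a, ha, Sym2.eq_swap⟩
      · rintro (h | ⟨w, hw, hewq⟩)
        · have h' := (SimpleGraph.mem_edgeSet _).mp h
          exact ⟨G1.ne_of_adj h', Or.inl h'⟩
        · have hcw : c ≠ w := fun hh => hcS (hh ▸ hw)
          rcases Sym2.eq_iff.mp hewq with ⟨h1, h2⟩ | ⟨h1, h2⟩
          · subst h1; subst h2
            exact ⟨hcw, Or.inr (Or.inl ⟨rfl, hw⟩)⟩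
          · subst h1; subst h2
            exact ⟨fun hh => hcw hh.symm, Or.inr (Or.inr ⟨hw, rfl⟩)⟩
  have hdisjE : Disjoint G1.edgeSet NE := by
    rw [Set.disjoint_left]
    rintro e he ⟨w, hw, rfl⟩
    exact absurd (hedge_small _ he w (Sym2.mem_mk_right c w)) (by have := hSmem w hw; omega)
  have hNEcard : NE.ncard = t := by
    rw [hNEd, Set.ncard_image_of_injective _ hinj_sc, Set.ncard_coe_finset, hScard]
  have hFcard : F.edgeSet.ncard = (n - 1) / 2 := by
    rw [hFedges, Set.ncard_union_eq hdisjE, hG1card, hNEcard]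
    omega
  -- pair set decomposition
  set e₀ : Sym2 (Fin n) := s(c, emb u) with he₀d
  have he₀G1 : e₀ ∈ G1.edgeSet := by
    rw [he₀d, SimpleGraph.mem_edgeSet]
    exact (SimpleGraph.map_adj emb F' _ _).mpr ⟨v, u, huv, rfl, rfl⟩
  have hold_c : ∀ e ∈ G1.edgeSet, c ∈ e → e = e₀ := by
    intro e he
    revert he
    induction e using Sym2.ind with
    | _ a b =>
      intro he hce
      rw [SimpleGraph.mem_edgeSet] at he
      rcases Sym2.mem_iff.mp hce with h1 | h1
      · subst h1
        rw [hcnbr b he, he₀d]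
      · subst h1
        rw [hcnbr a he.symm, Sym2.eq_swap, he₀d]
  have hnew_ne_old : ∀ w ∈ S, ∀ e ∈ G1.edgeSet, s(c, w) ≠ e := by
    intro w hw e he h
    exact absurd (hedge_small e he w (h ▸ Sym2.mem_mk_right c w))
      (by have := hSmem w hw; omega)
  have hw_not_in_old : ∀ w ∈ S, ∀ e ∈ G1.edgeSet, w ∉ e := by
    intro w hw e he hwe
    exact absurd (hedge_small e he w hwe) (by have := hSmem w hw; omega)
  set Φ : Sym2 (Fin (n - 2 * t)) × Sym2 (Fin (n - 2 * t)) → Sym2 (Fin n) × Sym2 (Fin n) :=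
    Prod.map (Sym2.map emb) (Sym2.map emb) with hΦd
  set PA := Φ '' pairSet F' with hPAd
  set A1 := (fun w : Fin n => (e₀, s(c, w))) '' ↑S with hA1d
  set A2 := (fun w : Fin n => (s(c, w), e₀)) '' ↑S with hA2d
  set B := (fun p : Fin n × Fin n => (s(c, p.1), s(c, p.2))) '' ↑S.offDiag with hBd
  have hPA_G1 : PA = pairSet G1 := by
    ext p
    constructor
    · rintro ⟨⟨e', f'⟩, ⟨he', hf', hne, x, hx1, hx2⟩, rfl⟩
      refine ⟨?_, ?_, ?_, ⟨emb x, ?_, ?_⟩⟩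
      · rw [hG1edges]; exact ⟨e', he', rfl⟩
      · rw [hG1edges]; exact ⟨f', hf', rfl⟩
      · intro h; exact hne (Sym2.map.injective emb.injective h)
      · exact Sym2.mem_map.mpr ⟨x, hx1, rfl⟩
      · exact Sym2.mem_map.mpr ⟨x, hx2, rfl⟩
    · rintro ⟨he, hf, hne, x, hx1, hx2⟩
      rw [hG1edges] at he hf
      obtain ⟨e', he', hpe⟩ := he
      obtain ⟨f', hf', hpf⟩ := hf
      rw [← hpe] at hx1
      rw [← hpf] at hx2
      obtain ⟨a, ha1, ha2⟩ := Sym2.mem_map.mp hx1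
      obtain ⟨b, hb1, hb2⟩ := Sym2.mem_map.mp hx2
      have hab : a = b := emb.injective (ha2.trans hb2.symm)
      subst hab
      refine ⟨(e', f'), ⟨he', hf', ?_, a, ha1, hb1⟩, ?_⟩
      · intro h
        have h' : e' = f' := h
        exact hne (by rw [← hpe, ← hpf, h'])
      · exact Prod.ext hpe hpf
  have hmain : pairSet F = PA ∪ A1 ∪ A2 ∪ B := by
    ext p
    constructor
    · rintro ⟨he, hf, hne, x, hx1, hx2⟩
      rw [hFedges] at he hf
      rcases he with he | ⟨w1, hw1, hew1⟩
      · rcases hf with hf | ⟨w2, hw2, hfw2⟩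
        · refine Or.inl (Or.inl (Or.inl ?_))
          rw [hPA_G1]
          exact ⟨he, hf, hne, x, hx1, hx2⟩
        · refine Or.inl (Or.inl (Or.inr ?_))
          rw [← hfw2] at hx2
          have hxc : x = c := by
            rcases Sym2.mem_iff.mp hx2 with h1 | h1
            · exact h1
            · exact absurd (h1 ▸ hx1) (hw_not_in_old w2 hw2 p.1 he)
          subst hxc
          exact ⟨w2, hw2, Prod.ext (hold_c p.1 he hx1).symm hfw2⟩
      · rcases hf with hf | ⟨w2, hw2, hfw2⟩
        · refine Or.inl (Or.inr ?_)
          rw [← hew1] at hx1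
          have hxc : x = c := by
            rcases Sym2.mem_iff.mp hx1 with h1 | h1
            · exact h1
            · exact absurd (h1 ▸ hx2) (hw_not_in_old w1 hw1 p.2 hf)
          subst hxc
          exact ⟨w1, hw1, Prod.ext hew1 (hold_c p.2 hf hx2).symm⟩
        · refine Or.inr ?_
          have hww : w1 ≠ w2 := fun h => hne (by rw [← hew1, ← hfw2, h])
          exact ⟨(w1, w2), Finset.mem_coe.mpr (Finset.mem_offDiag.mpr
            ⟨Finset.mem_coe.mp hw1, Finset.mem_coe.mp hw2, hww⟩), Prod.ext hew1 hfw2⟩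
    · rintro (((hp | hp) | hp) | hp)
      · rw [hPA_G1] at hp
        obtain ⟨he, hf, hne, x, hx⟩ := hp
        exact ⟨by rw [hFedges]; exact Or.inl he, by rw [hFedges]; exact Or.inl hf, hne, x, hx⟩
      · obtain ⟨w, hw, rfl⟩ := hp
        refine ⟨by rw [hFedges]; exact Or.inl he₀G1,
          by rw [hFedges]; exact Or.inr ⟨w, hw, rfl⟩, ?_, c, ?_, ?_⟩
        · intro h; exact hnew_ne_old w hw e₀ he₀G1 h.symm
        · rw [he₀d]; exact Sym2.mem_mk_left _ _
        · exact Sym2.mem_mk_left _ _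
      · obtain ⟨w, hw, rfl⟩ := hp
        refine ⟨by rw [hFedges]; exact Or.inr ⟨w, hw, rfl⟩,
          by rw [hFedges]; exact Or.inl he₀G1, ?_, c, ?_, ?_⟩
        · intro h; exact hnew_ne_old w hw e₀ he₀G1 h
        · exact Sym2.mem_mk_left _ _
        · rw [he₀d]; exact Sym2.mem_mk_left _ _
      · obtain ⟨⟨w1, w2⟩, hw, rfl⟩ := hp
        obtain ⟨hw1, hw2, hww⟩ := Finset.mem_offDiag.mp (Finset.mem_coe.mp hw)
        refine ⟨by rw [hFedges]; exact Or.inr ⟨w1, hw1, rfl⟩,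
          by rw [hFedges]; exact Or.inr ⟨w2, hw2, rfl⟩, ?_, c,
          Sym2.mem_mk_left _ _, Sym2.mem_mk_left _ _⟩
        intro h; exact hww (hinj_sc h)
  -- disjointness
  have hPAmem : ∀ p ∈ PA, p.1 ∈ G1.edgeSet ∧ p.2 ∈ G1.edgeSet := by
    rw [hPA_G1]
    rintro p ⟨he, hf, -⟩
    exact ⟨he, hf⟩
  have hD1 : Disjoint PA A1 := by
    rw [Set.disjoint_left]
    rintro p hp ⟨w, hw, rfl⟩
    exact hnew_ne_old w hw _ (hPAmem _ hp).2 rfl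
  have hD2 : Disjoint (PA ∪ A1) A2 := by
    rw [Set.disjoint_left]
    rintro p (hp | hp) ⟨w, hw, rfl⟩
    · exact hnew_ne_old w hw _ (hPAmem _ hp).1 rfl
    · obtain ⟨w', hw', heq⟩ := hp
      have h1 : e₀ = s(c, w) := congrArg Prod.fst heq
      exact hnew_ne_old w hw e₀ he₀G1 h1.symm
  have hD3 : Disjoint (PA ∪ A1 ∪ A2) B := by
    rw [Set.disjoint_left]
    rintro p ((hp | hp) | hp) ⟨⟨w1, w2⟩, hw, rfl⟩
    · obtain ⟨hw1, -, -⟩ := Finset.mem_offDiag.mp (Finset.mem_coe.mp hw)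
      exact hnew_ne_old w1 hw1 _ (hPAmem _ hp).1 rfl
    · obtain ⟨hw1, -, -⟩ := Finset.mem_offDiag.mp (Finset.mem_coe.mp hw)
      obtain ⟨w', hw', heq⟩ := hp
      have h1 : e₀ = s(c, w1) := congrArg Prod.fst heq
      exact hnew_ne_old w1 hw1 e₀ he₀G1 h1.symm
    · obtain ⟨-, hw2, -⟩ := Finset.mem_offDiag.mp (Finset.mem_coe.mp hw)
      obtain ⟨w', hw', heq⟩ := hp
      have h1 : e₀ = s(c, w2) := congrArg Prod.snd heq
      exact hnew_ne_old w2 hw2 e₀ he₀G1 h1.symm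
  -- cardinalities
  have hPAcard : PA.ncard = (pairSet F').ncard := by
    rw [hPAd, hΦd]
    exact Set.ncard_image_of_injective _
      ((Sym2.map.injective emb.injective).prodMap (Sym2.map.injective emb.injective))
  have hA1card : A1.ncard = t := by
    have hinj : Function.Injective (fun w : Fin n => (e₀, s(c, w))) := by
      intro w1 w2 h
      exact hinj_sc (congrArg Prod.snd h)
    rw [hA1d, Set.ncard_image_of_injective _ hinj, Set.ncard_coe_finset, hScard]
  have hA2card : A2.ncard = t := by
    have hinj : Function.Injective (fun w : Fin n => (s(c, w), e₀)) := by
      intro w1 w2 h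
      exact hinj_sc (congrArg Prod.fst h)
    rw [hA2d, Set.ncard_image_of_injective _ hinj, Set.ncard_coe_finset, hScard]
  have hBcard : B.ncard = t * t - t := by
    have hinj : Function.Injective (fun p : Fin n × Fin n => (s(c, p.1), s(c, p.2))) := by
      intro p q h
      exact Prod.ext (hinj_sc (congrArg Prod.fst h)) (hinj_sc (congrArg Prod.snd h))
    rw [hBd, Set.ncard_image_of_injective _ hinj, Set.ncard_coe_finset,
      Finset.offDiag_card, hScard]
  have hcard : (pairSet F).ncard = (pairSet F').ncard + t + t + (t * t - t) := by
    rw [hmain, Set.ncard_union_eq hD3, Set.ncard_union_eq hD2, Set.ncard_union_eq hD1,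
      hPAcard, hA1card, hA2card, hBcard]
  -- final arithmetic
  refine ⟨F, hFacyc, hFcard, ?_⟩
  rw [adjacentEdgePairs_eq] at hpairs ⊢
  rw [hcard, Nat.choose_two_right, Nat.add_sub_cancel, mul_comm (t + 1) t]
  obtain ⟨qq, hqq⟩ := Nat.even_mul_succ_self t
  have htt : t ≤ t * t := by
    rcases Nat.eq_zero_or_pos t with rfl | h
    · simp
    · exact Nat.le_mul_of_pos_left t h
  have hmul : t * t + t = t * (t + 1) := by ring
  generalize hP : t * (t + 1) = P at hqq hmul ⊢
  generalize hS : t * t = s2 at hmul htt ⊢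
  omega
end

section
/- For every even t ≥ 2 and every n with t < n, setting s = t/2 (a perfect matching on [t] gives s pairwise shadow-disjoint 2-sets), and for every α with s ≤ α ≤ (n-t)·s, there is a maximal antichain in B_n contained in C([n],2) ∪ C([n],3) of size C(n,2) - s - α. In particular, choosing t = ⌊n/2⌋ if n ≡ 0,1 (mod 4) and t = ⌊(n+2)/2⌋ if n ≡ 2,3 (mod 4), the minimum size obtained is C(n,2) - ⌊(n+1)²/8⌋. -/
namespace Stmt15

open Finset

/-- The triple `{2i+1, 2i+2, 2s+1+c}`. -/
def trip (s i c : ℕ) : Finset ℕ := {2*i+1, 2*i+2, 2*s+1+c}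

/-- Triple indexed by a single number `k`. -/
def tripK (s k : ℕ) : Finset ℕ := trip s (k % s) (k / s)

def Pairs (s n α : ℕ) : Finset (Finset ℕ) :=
  (Finset.powersetCard 2 (Finset.Icc 1 n)).filter (fun P => ∀ k < α, ¬ P ⊆ tripK s k)

def Triples (s α : ℕ) : Finset (Finset ℕ) := (Finset.range α).image (tripK s)

def Fam (s n α : ℕ) : Finset (Finset ℕ) := Pairs s n α ∪ Triples s α

lemma mem_trip {x s i c : ℕ} : x ∈ trip s i c ↔ x = 2*i+1 ∨ x = 2*i+2 ∨ x = 2*s+1+c := by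
  simp [trip]

lemma tripK_spec {s : ℕ} (hs : 1 ≤ s) (k : ℕ) :
    ∃ i c, i < s ∧ k % s = i ∧ k / s = c ∧ s * c + i = k :=
  ⟨k % s, k / s, Nat.mod_lt _ hs, rfl, rfl, Nat.div_add_mod k s⟩

lemma card_trip {s i c : ℕ} (h : i < s) : (trip s i c).card = 3 := by
  rw [trip, card_insert_of_notMem (by simp; omega), card_insert_of_notMem (by simp; omega),
    card_singleton]

lemma tripK_card {s k : ℕ} (hs : 1 ≤ s) : (tripK s k).card = 3 :=
  card_trip (Nat.mod_lt _ hs)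

lemma trip_subset_Icc {s n i c : ℕ} (hi : i < s) (hc : 2*s+1+c ≤ n) :
    trip s i c ⊆ Finset.Icc 1 n := by
  intro x hx
  rw [mem_trip] at hx
  rw [Finset.mem_Icc]
  omega

lemma div_bound {s α n k : ℕ} (hs : 1 ≤ s) (hk : k < α) (hα2 : α ≤ (n - 2*s)*s) :
    2*s+1+(k / s) ≤ n := by
  have h1 : k / s < n - 2*s := by
    rw [Nat.div_lt_iff_lt_mul hs]
    calc k < α := hk
    _ ≤ (n - 2*s)*s := hα2
  generalize k / s = q at h1 ⊢
  omega

lemma tripK_subset_Icc {s n α k : ℕ} (hs : 1 ≤ s) (hk : k < α) (hα2 : α ≤ (n - 2*s)*s) :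
    tripK s k ⊆ Finset.Icc 1 n :=
  trip_subset_Icc (Nat.mod_lt _ hs) (div_bound hs hk hα2)

lemma pair_eq_cases {a b c d : ℕ} (h : ({a,b} : Finset ℕ) = {c,d}) :
    (a = c ∧ b = d) ∨ (a = d ∧ b = c) := by
  have ha : a ∈ ({c,d} : Finset ℕ) := h ▸ mem_insert_self _ _
  have hb : b ∈ ({c,d} : Finset ℕ) := h ▸ (by simp)
  have hc : c ∈ ({a,b} : Finset ℕ) := h.symm ▸ mem_insert_self _ _
  have hd : d ∈ ({a,b} : Finset ℕ) := h.symm ▸ (by simp)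
  simp only [mem_insert, mem_singleton] at ha hb hc hd
  omega

lemma trip_eq_cases {s i c i' c' : ℕ} (hi : i < s) (hi' : i' < s)
    (h : trip s i c = trip s i' c') : i = i' ∧ c = c' := by
  have h1 : (2*i+1) ∈ trip s i' c' := h ▸ (by rw [mem_trip]; left; rfl)
  have h2 : (2*s+1+c) ∈ trip s i' c' := h ▸ (by rw [mem_trip]; right; right; rfl)
  rw [mem_trip] at h1 h2
  omega

lemma tripK_injOn {s α : ℕ} (hs : 1 ≤ s) : Set.InjOn (tripK s) (Finset.range α) := by
  intro k _ k' _ h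
  obtain ⟨i, c, hi, hm, hd, hrec⟩ := tripK_spec hs k
  obtain ⟨i', c', hi', hm', hd', hrec'⟩ := tripK_spec hs k'
  rw [tripK, tripK, hm, hd, hm', hd'] at h
  obtain ⟨e1, e2⟩ := trip_eq_cases hi hi' h
  rw [← hrec, ← hrec', e1, e2]

lemma card_Triples {s α : ℕ} (hs : 1 ≤ s) : (Triples s α).card = α := by
  rw [Triples, Finset.card_image_of_injOn (by exact_mod_cast tripK_injOn hs), card_range]

/-! The removed pairs. -/

def R0 (s : ℕ) : Finset (Finset ℕ) := (Finset.range s).image (fun i => ({2*i+1, 2*i+2} : Finset ℕ))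
def R1 (s α : ℕ) : Finset (Finset ℕ) :=
  (Finset.range α).image (fun k => ({2*(k % s)+1, 2*s+1+(k / s)} : Finset ℕ))
def R2 (s α : ℕ) : Finset (Finset ℕ) :=
  (Finset.range α).image (fun k => ({2*(k % s)+2, 2*s+1+(k / s)} : Finset ℕ))
def R (s α : ℕ) : Finset (Finset ℕ) := R0 s ∪ (R1 s α ∪ R2 s α)

lemma card_R {s α : ℕ} (hs : 1 ≤ s) : (R s α).card = s + 2*α := by
  have h0 : (R0 s).card = s := by
    rw [R0, Finset.card_image_of_injOn, card_range]
    intro i _ j _ h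
    have := pair_eq_cases h
    omega
  have h1 : (R1 s α).card = α := by
    rw [R1, Finset.card_image_of_injOn, card_range]
    intro k _ k' _ h
    obtain ⟨i, c, hi, hm, hd, hrec⟩ := tripK_spec hs k
    obtain ⟨i', c', hi', hm', hd', hrec'⟩ := tripK_spec hs k'
    dsimp only at h
    rw [hm, hd, hm', hd'] at h
    have h' := pair_eq_cases h
    have e : i = i' ∧ c = c' := by omega
    rw [← hrec, ← hrec', e.1, e.2]
  have h2 : (R2 s α).card = α := by
    rw [R2, Finset.card_image_of_injOn, card_range]
    intro k _ k' _ h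
    obtain ⟨i, c, hi, hm, hd, hrec⟩ := tripK_spec hs k
    obtain ⟨i', c', hi', hm', hd', hrec'⟩ := tripK_spec hs k'
    dsimp only at h
    rw [hm, hd, hm', hd'] at h
    have h' := pair_eq_cases h
    have e : i = i' ∧ c = c' := by omega
    rw [← hrec, ← hrec', e.1, e.2]
  have d12 : Disjoint (R1 s α) (R2 s α) := by
    rw [Finset.disjoint_left]
    rintro P hP1 hP2
    rw [R1, mem_image] at hP1; rw [R2, mem_image] at hP2
    obtain ⟨k, _, hk⟩ := hP1
    obtain ⟨k', _, hk'⟩ := hP2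
    obtain ⟨i, c, hi, hm, hd, hrec⟩ := tripK_spec hs k
    obtain ⟨i', c', hi', hm', hd', hrec'⟩ := tripK_spec hs k'
    rw [hm, hd] at hk; rw [hm', hd'] at hk'
    have h := pair_eq_cases (hk.trans hk'.symm)
    omega
  have d012 : Disjoint (R0 s) (R1 s α ∪ R2 s α) := by
    rw [Finset.disjoint_left]
    rintro P hP0 hP12
    rw [R0, mem_image] at hP0
    obtain ⟨j, hj, hPj⟩ := hP0
    rw [mem_range] at hj
    rw [mem_union, R1, R2, mem_image, mem_image] at hP12
    rcases hP12 with ⟨k, _, hk⟩ | ⟨k, _, hk⟩ <;>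
    · obtain ⟨i, c, hi, hm, hd, hrec⟩ := tripK_spec hs k
      rw [hm, hd] at hk
      have h := pair_eq_cases (hPj.trans hk.symm)
      omega
  rw [R, Finset.card_union_of_disjoint d012, Finset.card_union_of_disjoint d12, h0, h1, h2]
  omega

lemma R_subset {s n α : ℕ} (hs : 1 ≤ s) (hn : 2*s < n) (hα2 : α ≤ (n - 2*s)*s) :
    R s α ⊆ Finset.powersetCard 2 (Finset.Icc 1 n) := by
  intro P hP
  rw [R, mem_union, mem_union, R0, R1, R2, mem_image, mem_image, mem_image] at hP
  rw [mem_powersetCard]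
  rcases hP with ⟨i, hi, rfl⟩ | ⟨k, hk, rfl⟩ | ⟨k, hk, rfl⟩
  · rw [mem_range] at hi
    refine ⟨?_, Finset.card_pair (by omega)⟩
    intro x hx; simp only [mem_insert, mem_singleton] at hx; rw [Finset.mem_Icc]; omega
  · rw [mem_range] at hk
    have hb := div_bound hs hk hα2
    obtain ⟨i, c, hi, hm, hd, hrec⟩ := tripK_spec hs k
    rw [hd] at hb
    rw [hm, hd]
    refine ⟨?_, Finset.card_pair (by omega)⟩
    intro x hx; simp only [mem_insert, mem_singleton] at hx; rw [Finset.mem_Icc]; omega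
  · rw [mem_range] at hk
    have hb := div_bound hs hk hα2
    obtain ⟨i, c, hi, hm, hd, hrec⟩ := tripK_spec hs k
    rw [hd] at hb
    rw [hm, hd]
    refine ⟨?_, Finset.card_pair (by omega)⟩
    intro x hx; simp only [mem_insert, mem_singleton] at hx; rw [Finset.mem_Icc]; omega

lemma removed_iff {s n α : ℕ} (hs : 1 ≤ s) (hα1 : s ≤ α) {P : Finset ℕ}
    (hP : P ∈ Finset.powersetCard 2 (Finset.Icc 1 n)) :
    (∃ k < α, P ⊆ tripK s k) ↔ P ∈ R s α := by
  constructor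
  · rintro ⟨k, hk, hsub⟩
    rw [mem_powersetCard] at hP
    obtain ⟨x, y, hxy, rfl⟩ := Finset.card_eq_two.1 hP.2
    obtain ⟨i, c, hi, hm, hd, hrec⟩ := tripK_spec hs k
    have Dx : x ∈ tripK s k := hsub (by simp)
    have Dy : y ∈ tripK s k := hsub (by simp)
    rw [tripK, hm, hd, mem_trip] at Dx Dy
    have hcl : ({x,y} : Finset ℕ) = ({2*i+1, 2*i+2} : Finset ℕ) ∨
        ({x,y} : Finset ℕ) = ({2*i+1, 2*s+1+c} : Finset ℕ) ∨
        ({x,y} : Finset ℕ) = ({2*i+2, 2*s+1+c} : Finset ℕ) := by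
      rcases Dx with hx | hx | hx <;> rcases Dy with hy | hy | hy <;>
        first
          | omega
          | (rw [hx, hy]; exact Or.inl rfl)
          | (rw [hx, hy]; exact Or.inl (Finset.pair_comm _ _))
          | (rw [hx, hy]; exact Or.inr (Or.inl rfl))
          | (rw [hx, hy]; exact Or.inr (Or.inl (Finset.pair_comm _ _)))
          | (rw [hx, hy]; exact Or.inr (Or.inr rfl))
          | (rw [hx, hy]; exact Or.inr (Or.inr (Finset.pair_comm _ _)))
    rw [R, mem_union, mem_union, R0, R1, R2, mem_image, mem_image, mem_image]
    rcases hcl with h | h | h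
    · exact Or.inl ⟨i, mem_range.2 hi, h.symm⟩
    · exact Or.inr (Or.inl ⟨k, mem_range.2 hk, by rw [hm, hd]; exact h.symm⟩)
    · exact Or.inr (Or.inr ⟨k, mem_range.2 hk, by rw [hm, hd]; exact h.symm⟩)
  · intro hR
    rw [R, mem_union, mem_union, R0, R1, R2, mem_image, mem_image, mem_image] at hR
    rcases hR with ⟨i, hi, rfl⟩ | ⟨k, hk, rfl⟩ | ⟨k, hk, rfl⟩
    · rw [mem_range] at hi
      refine ⟨i, by omega, ?_⟩
      intro x hx
      rw [tripK, Nat.mod_eq_of_lt hi, Nat.div_eq_of_lt hi, mem_trip]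
      simp only [mem_insert, mem_singleton] at hx
      omega
    · rw [mem_range] at hk
      refine ⟨k, hk, ?_⟩
      intro x hx
      rw [tripK, mem_trip]
      simp only [mem_insert, mem_singleton] at hx
      omega
    · rw [mem_range] at hk
      refine ⟨k, hk, ?_⟩
      intro x hx
      rw [tripK, mem_trip]
      simp only [mem_insert, mem_singleton] at hx
      omega

lemma card_pc2 {n : ℕ} : (Finset.powersetCard 2 (Finset.Icc 1 n)).card = n.choose 2 := by
  rw [Finset.card_powersetCard, Nat.card_Icc]
  norm_num

lemma Pairs_eq_sdiff {s n α : ℕ} (hs : 1 ≤ s) (hα1 : s ≤ α) :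
    Pairs s n α = Finset.powersetCard 2 (Finset.Icc 1 n) \ R s α := by
  ext P
  rw [Pairs, mem_filter, mem_sdiff]
  constructor
  · rintro ⟨h1, h2⟩
    refine ⟨h1, fun hR => ?_⟩
    obtain ⟨k, hk, hsub⟩ := (removed_iff hs hα1 h1).2 hR
    exact h2 k hk hsub
  · rintro ⟨h1, h2⟩
    exact ⟨h1, fun k hk hsub => h2 ((removed_iff hs hα1 h1).1 ⟨k, hk, hsub⟩)⟩

lemma card_Pairs {s n α : ℕ} (hs : 1 ≤ s) (hn : 2*s < n) (hα1 : s ≤ α) (hα2 : α ≤ (n - 2*s)*s) :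
    (Pairs s n α).card = n.choose 2 - (s + 2*α) := by
  rw [Pairs_eq_sdiff hs hα1, card_sdiff_of_subset (R_subset hs hn hα2), card_R hs, card_pc2]

lemma mem_Pairs_card {s n α : ℕ} {P : Finset ℕ} (h : P ∈ Pairs s n α) :
    P.card = 2 ∧ P ⊆ Finset.Icc 1 n := by
  rw [Pairs, mem_filter, mem_powersetCard] at h
  exact ⟨h.1.2, h.1.1⟩

lemma mem_Triples_elim {s α : ℕ} {T : Finset ℕ} (h : T ∈ Triples s α) :
    ∃ k < α, T = tripK s k := by
  rw [Triples, mem_image] at h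
  obtain ⟨k, hk, rfl⟩ := h
  exact ⟨k, mem_range.1 hk, rfl⟩

lemma mem_Triples_of {s α k : ℕ} (hk : k < α) : tripK s k ∈ Triples s α :=
  mem_image_of_mem (tripK s) (mem_range.2 hk)

lemma disj_PT {s n α : ℕ} (hs : 1 ≤ s) : Disjoint (Pairs s n α) (Triples s α) := by
  rw [Finset.disjoint_left]
  intro P hP hT
  obtain ⟨k, _, rfl⟩ := mem_Triples_elim hT
  have := (mem_Pairs_card hP).1
  rw [tripK_card hs] at this
  omega

lemma card_Fam {s n α : ℕ} (hs : 1 ≤ s) (hn : 2*s < n) (hα1 : s ≤ α) (hα2 : α ≤ (n - 2*s)*s) :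
    ((Fam s n α).card : ℤ) = (n.choose 2 : ℤ) - s - α := by
  have hle : s + 2*α ≤ n.choose 2 := by
    have := Finset.card_le_card (R_subset hs hn hα2)
    rwa [card_R hs, card_pc2] at this
  rw [Fam, Finset.card_union_of_disjoint (disj_PT hs), card_Pairs hs hn hα1 hα2,
    card_Triples hs]
  push_cast [hle]
  ring

lemma Fam_subset {s n α : ℕ} (hs : 1 ≤ s) (hα2 : α ≤ (n - 2*s)*s) :
    Fam s n α ⊆ Finset.powersetCard 2 (Finset.Icc 1 n) ∪
      Finset.powersetCard 3 (Finset.Icc 1 n) := by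
  intro X hX
  rw [Fam, mem_union] at hX
  rw [mem_union]
  rcases hX with hX | hX
  · exact Or.inl ((mem_filter.1 hX).1)
  · obtain ⟨k, hk, rfl⟩ := mem_Triples_elim hX
    exact Or.inr (mem_powersetCard.2 ⟨tripK_subset_Icc hs hk hα2, tripK_card hs⟩)

lemma Fam_antichain {s n α : ℕ} (hs : 1 ≤ s) :
    IsAntichain (· ⊆ ·) ((Fam s n α : Finset (Finset ℕ)) : Set (Finset ℕ)) := by
  intro X hX Y hY hne hsub
  rw [Finset.mem_coe, Fam, mem_union] at hX hY
  rcases hX with hX | hX <;> rcases hY with hY | hY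
  · exact hne (Finset.eq_of_subset_of_card_le hsub
      (by rw [(mem_Pairs_card hX).1, (mem_Pairs_card hY).1]))
  · obtain ⟨k, hk, rfl⟩ := mem_Triples_elim hY
    exact (mem_filter.1 hX).2 k hk hsub
  · have h1 := Finset.card_le_card hsub
    obtain ⟨k, _, rfl⟩ := mem_Triples_elim hX
    rw [tripK_card hs, (mem_Pairs_card hY).1] at h1
    omega
  · obtain ⟨k, _, rfl⟩ := mem_Triples_elim hX
    obtain ⟨k', _, rfl⟩ := mem_Triples_elim hY
    exact hne (Finset.eq_of_subset_of_card_le hsub (by rw [tripK_card hs, tripK_card hs]))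

lemma not_antichain_insert {A : Finset (Finset ℕ)} {B C : Finset ℕ} (hC : C ∈ A) (hne : C ≠ B)
    (h : C ⊆ B ∨ B ⊆ C) : ¬ IsAntichain (· ⊆ ·) (insert B (A : Set (Finset ℕ))) := by
  intro hA
  rcases h with h | h
  · exact hA (Set.mem_insert_of_mem _ hC) (Set.mem_insert _ _) hne h
  · exact hA (Set.mem_insert _ _) (Set.mem_insert_of_mem _ hC) (Ne.symm hne) h

lemma aux_one_big {s α : ℕ} (hs : 1 ≤ s) {x y z : ℕ} (hxy : x ≠ y) (hx : x ≤ 2*s)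
    (hy : y ≤ 2*s) (hz : 2*s < z)
    (h1 : ∃ k < α, ({x,y} : Finset ℕ) ⊆ tripK s k)
    (h2 : ∃ k < α, ({x,z} : Finset ℕ) ⊆ tripK s k) :
    ∃ k < α, tripK s k ⊆ ({x,y,z} : Finset ℕ) := by
  obtain ⟨k1, hk1, hsub1⟩ := h1
  obtain ⟨k2, hk2, hsub2⟩ := h2
  obtain ⟨i1, c1, hi1, hm1, hd1, _⟩ := tripK_spec hs k1
  obtain ⟨i2, c2, hi2, hm2, hd2, _⟩ := tripK_spec hs k2
  have m1x : x ∈ tripK s k1 := hsub1 (by simp)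
  have m1y : y ∈ tripK s k1 := hsub1 (by simp)
  have m2x : x ∈ tripK s k2 := hsub2 (by simp)
  have m2z : z ∈ tripK s k2 := hsub2 (by simp)
  rw [tripK, hm1, hd1, mem_trip] at m1x m1y
  rw [tripK, hm2, hd2, mem_trip] at m2x m2z
  refine ⟨k2, hk2, ?_⟩
  intro w hw
  rw [tripK, hm2, hd2, mem_trip] at hw
  simp only [mem_insert, mem_singleton]
  omega

lemma three_elt {s n α : ℕ} (hs : 1 ≤ s) (hα1 : s ≤ α) {B : Finset ℕ}
    (hBsub : B ⊆ Finset.Icc 1 n) {a b c : ℕ} (ha : a ∈ B) (hb : b ∈ B) (hc : c ∈ B)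
    (hab : a ≠ b) (hac : a ≠ c) (hbc : b ≠ c)
    (hnoP : ∀ P ∈ Pairs s n α, ¬ P ⊆ B) :
    ∃ T ∈ Triples s α, T ⊆ B := by
  have key : ∀ x y : ℕ, x ∈ B → y ∈ B → x ≠ y →
      ∃ k < α, ({x,y} : Finset ℕ) ⊆ tripK s k := by
    intro x y hxB hyB hxy
    have hsub : ({x,y} : Finset ℕ) ⊆ B := by
      intro w hw; simp only [mem_insert, mem_singleton] at hw
      rcases hw with rfl | rfl <;> assumption
    have hpc : ({x,y} : Finset ℕ) ∈ Finset.powersetCard 2 (Finset.Icc 1 n) :=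
      mem_powersetCard.2 ⟨hsub.trans hBsub, Finset.card_pair hxy⟩
    by_contra hno
    push_neg at hno
    exact hnoP _ (mem_filter.2 ⟨hpc, fun k hk => hno k hk⟩) hsub
  have fin : ∀ x y z : ℕ, x ∈ B → y ∈ B → z ∈ B → x ≠ y → x ≠ z → y ≠ z →
      x ≤ 2*s → y ≤ 2*s → 2*s < z → ∃ T ∈ Triples s α, T ⊆ B := by
    intro x y z hxB hyB hzB hxy hxz _ hx hy hz
    obtain ⟨k, hk, hsub⟩ := aux_one_big hs hxy hx hy hz (key x y hxB hyB hxy)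
      (key x z hxB hzB hxz)
    refine ⟨tripK s k, mem_Triples_of hk, hsub.trans ?_⟩
    intro w hw
    simp only [mem_insert, mem_singleton] at hw
    rcases hw with rfl | rfl | rfl <;> assumption
  have nb : ∀ x y : ℕ, x ∈ B → y ∈ B → x ≠ y → 2*s < x → 2*s < y → False := by
    intro x y hxB hyB hxy hbx hby
    obtain ⟨k, hk, hsub⟩ := key x y hxB hyB hxy
    obtain ⟨i, c, hi, hm, hd, _⟩ := tripK_spec hs k
    have h1 : x ∈ tripK s k := hsub (by simp)
    have h2 : y ∈ tripK s k := hsub (by simp)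
    rw [tripK, hm, hd, mem_trip] at h1 h2
    omega
  by_cases hca : 2*s < a
  · by_cases hcb : 2*s < b
    · exact absurd (nb a b ha hb hab hca hcb) (by simp)
    · by_cases hcc : 2*s < c
      · exact absurd (nb a c ha hc hac hca hcc) (by simp)
      · exact fin b c a hb hc ha hbc (Ne.symm hab) (Ne.symm hac) (by omega) (by omega) hca
  · by_cases hcb : 2*s < b
    · by_cases hcc : 2*s < c
      · exact absurd (nb b c hb hc hbc hcb hcc) (by simp)
      · exact fin a c b ha hc hb hac hab (Ne.symm hbc) (by omega) (by omega) hcb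
    · by_cases hcc : 2*s < c
      · exact fin a b c ha hb hc hab hac hbc (by omega) (by omega) hcc
      · exfalso
        obtain ⟨k1, hk1, hs1⟩ := key a b ha hb hab
        obtain ⟨k2, hk2, hs2⟩ := key a c ha hc hac
        obtain ⟨i1, c1, hi1, hm1, hd1, _⟩ := tripK_spec hs k1
        obtain ⟨i2, c2, hi2, hm2, hd2, _⟩ := tripK_spec hs k2
        have m1a : a ∈ tripK s k1 := hs1 (by simp)
        have m1b : b ∈ tripK s k1 := hs1 (by simp)
        have m2a : a ∈ tripK s k2 := hs2 (by simp)
        have m2c : c ∈ tripK s k2 := hs2 (by simp)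
        rw [tripK, hm1, hd1, mem_trip] at m1a m1b
        rw [tripK, hm2, hd2, mem_trip] at m2a m2c
        omega

lemma Fam_max {s n α : ℕ} (hs : 1 ≤ s) (hn : 2*s < n) (hα1 : s ≤ α) (hα2 : α ≤ (n - 2*s)*s) :
    ∀ B : Finset ℕ, B ⊆ Finset.Icc 1 n → B ∉ Fam s n α →
      ¬ IsAntichain (· ⊆ ·) (insert B ((Fam s n α : Finset (Finset ℕ)) : Set (Finset ℕ))) := by
  intro B hBsub hBnot
  have hneB : ∀ C ∈ Fam s n α, C ≠ B := fun C hC h => hBnot (h ▸ hC)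
  by_cases h3 : 3 ≤ B.card
  · obtain ⟨S, hSB, hS3⟩ := Finset.exists_subset_card_eq h3
    obtain ⟨a, b, c, hab, hac, hbc, rfl⟩ := Finset.card_eq_three.1 hS3
    have ha : a ∈ B := hSB (by simp)
    have hb : b ∈ B := hSB (by simp)
    have hc : c ∈ B := hSB (by simp)
    by_cases hP : ∃ P ∈ Pairs s n α, P ⊆ B
    · obtain ⟨P, hPm, hPB⟩ := hP
      have hPF : P ∈ Fam s n α := mem_union_left _ hPm
      exact not_antichain_insert hPF (hneB _ hPF) (Or.inl hPB)
    · push_neg at hP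
      obtain ⟨T, hT, hTB⟩ := three_elt hs hα1 hBsub ha hb hc hab hac hbc hP
      have hTF : T ∈ Fam s n α := mem_union_right _ hT
      exact not_antichain_insert hTF (hneB _ hTF) (Or.inl hTB)
  · by_cases h2 : B.card = 2
    · have hpc : B ∈ Finset.powersetCard 2 (Finset.Icc 1 n) := mem_powersetCard.2 ⟨hBsub, h2⟩
      have hBnotP : B ∉ Pairs s n α := fun h => hBnot (mem_union_left _ h)
      rw [Pairs, mem_filter] at hBnotP
      push_neg at hBnotP
      obtain ⟨k, hk, hsub⟩ := hBnotP hpc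
      have hT : tripK s k ∈ Fam s n α := mem_union_right _ (mem_Triples_of hk)
      exact not_antichain_insert hT (hneB _ hT) (Or.inr hsub)
    · have hfind : ∃ C ∈ Fam s n α, B ⊆ C := by
        by_cases h0 : B = ∅
        · subst h0
          exact ⟨tripK s 0, mem_union_right _ (mem_Triples_of (by omega)),
            empty_subset _⟩
        · have h1 : B.card = 1 := by
            have := Finset.card_pos.2 (Finset.nonempty_iff_ne_empty.2 h0)
            omega
          obtain ⟨j, rfl⟩ := Finset.card_eq_one.1 h1
          have hj : j ∈ Finset.Icc 1 n := hBsub (by simp)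
          rw [Finset.mem_Icc] at hj
          by_cases hsm : j ≤ 2*s
          · have hlt1 : (j-1)/2 < α := by omega
            refine ⟨tripK s ((j-1)/2), mem_union_right _ (mem_Triples_of hlt1), ?_⟩
            rw [Finset.singleton_subset_iff, tripK,
              Nat.mod_eq_of_lt (show (j-1)/2 < s by omega),
              Nat.div_eq_of_lt (show (j-1)/2 < s by omega), mem_trip]
            omega
          · by_cases hlt : (j - 2*s - 1)*s < α
            · refine ⟨tripK s ((j-2*s-1)*s),
                mem_union_right _ (mem_Triples_of hlt), ?_⟩
              rw [Finset.singleton_subset_iff, tripK, Nat.mul_mod_left,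
                Nat.mul_div_cancel _ hs, mem_trip]
              omega
            · push_neg at hlt
              refine ⟨{1, j}, mem_union_left _ ?_,
                Finset.singleton_subset_iff.2 (by simp)⟩
              rw [Pairs, mem_filter]
              refine ⟨mem_powersetCard.2 ⟨?_, Finset.card_pair (by omega)⟩, ?_⟩
              · intro w hw; simp only [mem_insert, mem_singleton] at hw
                rw [Finset.mem_Icc]; omega
              · intro k hk hsub
                have hjm : j ∈ tripK s k := hsub (by simp)
                obtain ⟨i, c, hi, hm, hd, hrec⟩ := tripK_spec hs k
                rw [tripK, hm, hd, mem_trip] at hjm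
                have hc : c = j - 2*s - 1 := by omega
                subst hc
                have hck : (j - 2*s - 1) * s ≤ k := by
                  rw [Nat.mul_comm]; omega
                omega
      obtain ⟨C, hC, hBC⟩ := hfind
      exact not_antichain_insert hC (hneB _ hC) (Or.inr hBC)

end Stmt15

theorem stmt_15 :
    (∀ t n : ℕ, Even t → 2 ≤ t → t < n → ∀ α : ℕ, t / 2 ≤ α → α ≤ (n - t) * (t / 2) →
      ∃ A : Finset (Finset ℕ), IsMaximalAntichainIn n A ∧
        A ⊆ Finset.powersetCard 2 (Finset.Icc 1 n) ∪
          Finset.powersetCard 3 (Finset.Icc 1 n) ∧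
        (A.card : ℤ) = (n.choose 2 : ℤ) - (t / 2 : ℕ) - α) ∧
    (∀ n : ℕ, 4 ≤ n →
      ∃ A : Finset (Finset ℕ), IsMaximalAntichainIn n A ∧
        A ⊆ Finset.powersetCard 2 (Finset.Icc 1 n) ∪
          Finset.powersetCard 3 (Finset.Icc 1 n) ∧
        (A.card : ℤ) = (n.choose 2 : ℤ) - ((n + 1) ^ 2 / 8 : ℕ)) := by
  have part1 : ∀ t n : ℕ, Even t → 2 ≤ t → t < n → ∀ α : ℕ, t / 2 ≤ α → α ≤ (n - t) * (t / 2) →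
      ∃ A : Finset (Finset ℕ), IsMaximalAntichainIn n A ∧
        A ⊆ Finset.powersetCard 2 (Finset.Icc 1 n) ∪
          Finset.powersetCard 3 (Finset.Icc 1 n) ∧
        (A.card : ℤ) = (n.choose 2 : ℤ) - (t / 2 : ℕ) - α := by
    intro t n ht ht2 htn α hα1 hα2
    obtain ⟨s, rfl⟩ := ht
    have hs : 1 ≤ s := by omega
    have e1 : (s + s) / 2 = s := by omega
    have e2 : s + s = 2*s := by ring
    rw [e1, e2] at hα2
    rw [e1] at hα1
    have hn : 2*s < n := by omega
    refine ⟨Stmt15.Fam s n α, ⟨?_, Stmt15.Fam_antichain hs, Stmt15.Fam_max hs hn hα1 hα2⟩,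
      Stmt15.Fam_subset hs hα2, ?_⟩
    · intro X hX
      have h := Stmt15.Fam_subset hs hα2 hX
      rw [Finset.mem_union] at h
      rcases h with h | h <;> exact (Finset.mem_powersetCard.1 h).1
    · rw [e1]
      exact Stmt15.card_Fam hs hn hα1 hα2
  refine ⟨part1, ?_⟩
  intro n hn4
  obtain ⟨m, r, hr4, rfl⟩ : ∃ m r, r < 4 ∧ n = 4*m+r :=
    ⟨n/4, n%4, Nat.mod_lt _ (by norm_num), by omega⟩
  interval_cases r
  · -- n = 4m
    have hm : 1 ≤ m := by omega
    have e : 2*m/2 = m := by omega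
    have hα1' : 2*m/2 ≤ 2*m*m := by
      rw [e]; exact Nat.le_mul_of_pos_left m (by omega)
    have hα2' : 2*m*m ≤ (4*m+0 - 2*m) * (2*m/2) := by
      rw [e, show 4*m+0-2*m = 2*m from by omega]
    have e8 : ((4*m+0+1)^2/8 : ℕ) = m + 2*m*m := by
      rw [show (4*m+0+1)^2 = 8*(m + 2*m*m) + 1 from by ring, Nat.mul_add_div (by norm_num)]
      norm_num
    obtain ⟨A, hA1, hA2, hA3⟩ := part1 (2*m) (4*m+0) (by rw [Nat.even_iff]; omega)
      (by omega) (by omega) (2*m*m) hα1' hα2'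
    refine ⟨A, hA1, hA2, ?_⟩
    rw [hA3, e, e8]
    push_cast; ring
  · -- n = 4m+1
    have hm : 1 ≤ m := by omega
    have e : 2*m/2 = m := by omega
    have hα1' : 2*m/2 ≤ (2*m+1)*m := by
      rw [e]; exact Nat.le_mul_of_pos_left m (by omega)
    have hα2' : (2*m+1)*m ≤ (4*m+1 - 2*m) * (2*m/2) := by
      rw [e, show 4*m+1-2*m = 2*m+1 from by omega]
    have e8 : ((4*m+1+1)^2/8 : ℕ) = m + (2*m+1)*m := by
      rw [show (4*m+1+1)^2 = 8*(m + (2*m+1)*m) + 4 from by ring, Nat.mul_add_div (by norm_num)]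
      norm_num
    obtain ⟨A, hA1, hA2, hA3⟩ := part1 (2*m) (4*m+1) (by rw [Nat.even_iff]; omega)
      (by omega) (by omega) ((2*m+1)*m) hα1' hα2'
    refine ⟨A, hA1, hA2, ?_⟩
    rw [hA3, e, e8]
    push_cast; ring
  · -- n = 4m+2
    have hm : 1 ≤ m := by omega
    have e : (2*m+2)/2 = m+1 := by omega
    have hα1' : (2*m+2)/2 ≤ 2*m*(m+1) := by
      rw [e]; exact Nat.le_mul_of_pos_left (m+1) (by omega)
    have hα2' : 2*m*(m+1) ≤ (4*m+2 - (2*m+2)) * ((2*m+2)/2) := by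
      rw [e, show 4*m+2-(2*m+2) = 2*m from by omega]
    have e8 : ((4*m+2+1)^2/8 : ℕ) = (m+1) + 2*m*(m+1) := by
      rw [show (4*m+2+1)^2 = 8*((m+1) + 2*m*(m+1)) + 1 from by ring,
        Nat.mul_add_div (by norm_num)]
      norm_num
    obtain ⟨A, hA1, hA2, hA3⟩ := part1 (2*m+2) (4*m+2) (by rw [Nat.even_iff]; omega)
      (by omega) (by omega) (2*m*(m+1)) hα1' hα2'
    refine ⟨A, hA1, hA2, ?_⟩
    rw [hA3, e, e8]
    push_cast; ring
  · -- n = 4m+3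
    have e : (2*m+2)/2 = m+1 := by omega
    have hα1' : (2*m+2)/2 ≤ (2*m+1)*(m+1) := by
      rw [e]; exact Nat.le_mul_of_pos_left (m+1) (by omega)
    have hα2' : (2*m+1)*(m+1) ≤ (4*m+3 - (2*m+2)) * ((2*m+2)/2) := by
      rw [e, show 4*m+3-(2*m+2) = 2*m+1 from by omega]
    have e8 : ((4*m+3+1)^2/8 : ℕ) = (m+1) + (2*m+1)*(m+1) := by
      rw [show (4*m+3+1)^2 = 8*((m+1) + (2*m+1)*(m+1)) from by ring]
      exact Nat.mul_div_cancel_left _ (by norm_num)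
    obtain ⟨A, hA1, hA2, hA3⟩ := part1 (2*m+2) (4*m+3) (by rw [Nat.even_iff]; omega)
      (by omega) (by omega) ((2*m+1)*(m+1)) hα1' hα2'
    refine ⟨A, hA1, hA2, ?_⟩
    rw [hA3, e, e8]
    push_cast; ring
end
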